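/- arXiv:1312.3731 — 16 statements merged into one kernel-verified Lean document; each statement's English description precedes it below -/
import Mathlib

section
/- If v_1, ..., v_{N+1} are vectors in C^N with ⟨v_i, v_j⟩ = -1 for all i ≠ j, and p_i = 1/(1 + ‖v_i‖²), then the sum of the p_i equals 1. -/
open scoped BigOperators InnerProductSpace ComplexConjugate

/-- **Obtuse systems: probabilities sum to one.**
If `v 1, …, v (N+1)` are vectors in `ℂ^N` with `⟪v i, v j⟫ = -1` for all `i ≠ j`,
and `p i = 1 / (1 + ‖v i‖²)`, then `∑ i, p i = 1`. -/
theorem obtuse_sum_probabilities (N : ℕ)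
    (v : Fin (N + 1) → EuclideanSpace ℂ (Fin N))
    (hobt : ∀ i j, i ≠ j → ⟪v i, v j⟫_ℂ = -1)
    (p : Fin (N + 1) → ℝ)
    (hp : ∀ i, p i = 1 / (1 + ‖v i‖ ^ 2)) :
    ∑ i, p i = 1 := by
  have hpos : ∀ i, (0:ℝ) < 1 + ‖v i‖ ^ 2 := fun i => by positivity
  have hfne : ∀ i, (1 + (‖v i‖:ℂ) ^ 2) ≠ 0 := by
    intro i
    have : ((1 + ‖v i‖ ^ 2 : ℝ) : ℂ) ≠ 0 := by
      exact_mod_cast (hpos i).ne'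
    simpa using this
  have hnli : ¬ LinearIndependent ℂ v := by
    intro h
    have := h.fintype_card_le_finrank
    simp [finrank_euclideanSpace] at this
  obtain ⟨g, hg0, i0, hi0⟩ := Fintype.not_linearIndependent_iff.mp hnli
  set S : ℂ := ∑ i, g i with hS
  have key : ∀ j, g j * (1 + (‖v j‖:ℂ) ^ 2) = S := by
    intro j
    have h0 : ⟪v j, ∑ i, g i • v i⟫_ℂ = 0 := by rw [hg0, inner_zero_right]
    rw [inner_sum] at h0
    simp_rw [inner_smul_right] at h0
    rw [← Finset.add_sum_erase _ _ (Finset.mem_univ j)] at h0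
    have hjj : ⟪v j, v j⟫_ℂ = (‖v j‖:ℂ) ^ 2 := by
      simpa using inner_self_eq_norm_sq_to_K (𝕜 := ℂ) (v j)
    rw [hjj] at h0
    have hrest : ∑ i ∈ Finset.univ.erase j, g i * ⟪v j, v i⟫_ℂ
        = ∑ i ∈ Finset.univ.erase j, g i * (-1) := by
      refine Finset.sum_congr rfl fun i hi => ?_
      rw [hobt j i (Ne.symm (Finset.ne_of_mem_erase hi))]
    have hsum : ∑ i ∈ Finset.univ.erase j, g i = S - g j := by
      rw [hS, ← Finset.add_sum_erase _ _ (Finset.mem_univ j)]; ring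
    rw [hrest, ← Finset.sum_mul, hsum] at h0
    linear_combination h0
  have hSne : S ≠ 0 := by
    intro h
    apply hi0
    have := key i0
    rw [h] at this
    exact (mul_eq_zero.mp this).resolve_right (hfne i0)
  have hgj : ∀ j, g j = S * ((p j : ℝ) : ℂ) := by
    intro j
    have hcast : ((p j : ℝ) : ℂ) = (1 + (‖v j‖:ℂ) ^ 2)⁻¹ := by
      rw [hp j]; push_cast; rw [one_div]
    rw [hcast, eq_mul_inv_iff_mul_eq₀ (hfne j)]
    exact key j
  have hSe : S = S * ∑ j, ((p j : ℝ) : ℂ) := by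
    rw [hS, Finset.mul_sum]
    exact Finset.sum_congr rfl fun j _ => hgj j
  have hone : (∑ j, ((p j : ℝ) : ℂ)) = 1 :=
    (mul_left_cancel₀ hSne (by rw [← hSe, mul_one])).symm
  have hfin : ((∑ j, p j : ℝ) : ℂ) = ((1:ℝ):ℂ) := by push_cast; exact hone
  exact Complex.ofReal_injective hfin
end

section
/- If v_1, ..., v_{N+1} is an obtuse system in C^N with p_i = 1/(1 + ‖v_i‖²), then ∑_{i=1}^{N+1} p_i · v_i = 0. -/
open scoped BigOperators InnerProductSpace ComplexConjugate

/-- **Obtuse systems are centered.**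
If `v 1, …, v (N+1)` is an obtuse system in `ℂ^N` with `p i = 1 / (1 + ‖v i‖²)`,
then `∑ i, p i • v i = 0`. -/
theorem obtuse_centered (N : ℕ)
    (v : Fin (N + 1) → EuclideanSpace ℂ (Fin N))
    (hobt : ∀ i j, i ≠ j → ⟪v i, v j⟫_ℂ = -1)
    (p : Fin (N + 1) → ℝ)
    (hp : ∀ i, p i = 1 / (1 + ‖v i‖ ^ 2)) :
    ∑ i, (p i : ℂ) • v i = 0 := by
  -- N+1 vectors in ℂ^N are linearly dependent
  have hdep : ¬ LinearIndependent ℂ v := by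
    intro hli
    have := hli.fintype_card_le_finrank
    simp [finrank_euclideanSpace_fin] at this
  obtain ⟨g, hgsum, k, hk⟩ := Fintype.not_linearIndependent_iff.mp hdep
  set C : ℂ := ∑ i, g i with hC
  have hpos : ∀ j, (0:ℝ) < 1 + ‖v j‖ ^ 2 := fun j => by positivity
  have key : ∀ j, g j * (1 + (‖v j‖:ℂ) ^ 2) = C := by
    intro j
    have h0 : ⟪v j, ∑ i, g i • v i⟫_ℂ = 0 := by rw [hgsum, inner_zero_right]
    rw [inner_sum] at h0
    simp only [inner_smul_right] at h0
    have hsplit : ∑ i, g i * ⟪v j, v i⟫_ℂ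
        = ∑ i, (g i * ⟪v j, v i⟫_ℂ + g i) - C := by
      rw [Finset.sum_add_distrib, hC]; ring
    rw [hsplit] at h0
    have hterm : ∀ i, g i * ⟪v j, v i⟫_ℂ + g i
        = if i = j then g j * (1 + (‖v j‖:ℂ) ^ 2) else 0 := by
      intro i
      by_cases h : i = j
      · subst h
        have hself : ⟪v i, v i⟫_ℂ = ((‖v i‖ : ℂ)) ^ 2 := inner_self_eq_norm_sq_to_K (v i)
        rw [if_pos rfl, hself]
        ring
      · rw [if_neg h, hobt j i (Ne.symm h)]; ring
    rw [Finset.sum_congr rfl (fun i _ => hterm i), Finset.sum_ite_eq' Finset.univ j] at h0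
    simp at h0
    linear_combination h0
  have hne : ∀ j, (1 + (‖v j‖:ℂ) ^ 2) ≠ 0 := by
    intro j
    have : ((1 + ‖v j‖ ^ 2 : ℝ) : ℂ) ≠ 0 := by
      exact_mod_cast (hpos j).ne'
    simpa using this
  have hCne : C ≠ 0 := by
    intro h
    apply hk
    have := key k
    rw [h] at this
    exact (mul_eq_zero.mp this).resolve_right (hne k)
  have hg : ∀ j, g j = C * (p j : ℂ) := by
    intro j
    rw [hp j]
    push_cast
    field_simp [hne j]
    linear_combination key j
  have : ∑ i, (p i : ℂ) • v i = C⁻¹ • ∑ i, g i • v i := by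
    rw [Finset.smul_sum]
    refine Finset.sum_congr rfl fun i _ => ?_
    rw [hg i, smul_smul, ← mul_assoc, inv_mul_cancel₀ hCne, one_mul]
  rw [this, hgsum, smul_zero]
end

section
/- If v_1, ..., v_{N+1} is an obtuse system in C^N with p_i = 1/(1 + ‖v_i‖²), then ∑_{i=1}^{N+1} p_i · |v_i⟩⟨v_i| = I, the identity operator on C^N. -/
/-!
Appending the coordinate `1` to each `v i` gives vectors `u i = (v i, 1)` in `E × 𝕜` with
`⟪u i, u j⟫ = ⟪v i, v j⟫ + 1`: the obtuse condition says exactly that the `u i` are pairwise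
orthogonal, and `‖u i‖² = 1 + ‖v i‖² = 1 / p i`. Being `N + 1` nonzero orthogonal vectors in an
`(N + 1)`-dimensional space, they form an orthogonal basis, so Parseval's expansion of `(x, 0)`
in this basis, projected back onto `E`, is the claimed resolution of the identity.
-/

open scoped InnerProductSpace
open Module

variable {𝕜 E ι : Type*} [RCLike 𝕜] [NormedAddCommGroup E] [InnerProductSpace 𝕜 E]

theorem orthonormal_inv_norm_smul {u : ι → E} (hu : Pairwise fun i j => ⟪u i, u j⟫_𝕜 = 0)
    (hne : ∀ i, u i ≠ 0) : Orthonormal 𝕜 fun i => (‖u i‖⁻¹ : 𝕜) • u i := by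
  refine ⟨fun i => ?_, fun i j hij => ?_⟩
  · simp [norm_smul, hne i]
  · simp [inner_smul_left, inner_smul_right, hu hij]

theorem sum_inv_norm_sq_smul_inner_smul_eq_self [FiniteDimensional 𝕜 E] [Fintype ι]
    {u : ι → E} (hu : Pairwise fun i j => ⟪u i, u j⟫_𝕜 = 0) (hne : ∀ i, u i ≠ 0)
    (hcard : Fintype.card ι = finrank 𝕜 E) (y : E) :
    ∑ i, (((‖u i‖ ^ 2)⁻¹ : ℝ) : 𝕜) • ⟪u i, y⟫_𝕜 • u i = y := by
  have hon := orthonormal_inv_norm_smul hu hne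
  let b := OrthonormalBasis.mk hon
    (hon.linearIndependent.span_eq_top_of_card_eq_finrank' hcard).ge
  conv_rhs => rw [← b.sum_repr' y]
  refine Finset.sum_congr rfl fun i _ => ?_
  simp only [b, OrthonormalBasis.coe_mk, inner_smul_left, smul_smul, map_inv₀,
    RCLike.conj_ofReal]
  congr 1
  push_cast
  ring

theorem sum_inv_one_add_norm_sq_smul_inner_smul_eq_self_of_obtuse [FiniteDimensional 𝕜 E]
    [Fintype ι] {v : ι → E} (hobt : Pairwise fun i j => ⟪v i, v j⟫_𝕜 = -1)
    (hcard : Fintype.card ι = finrank 𝕜 E + 1) (x : E) :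
    ∑ i, (((1 + ‖v i‖ ^ 2)⁻¹ : ℝ) : 𝕜) • ⟪v i, x⟫_𝕜 • v i = x := by
  let u : ι → WithLp 2 (E × 𝕜) := fun i => WithLp.toLp 2 (v i, 1)
  have hu : Pairwise fun i j => ⟪u i, u j⟫_𝕜 = 0 := fun i j hij => by
    simp [u, hobt hij]
  have hnorm : ∀ i, ‖u i‖ ^ 2 = 1 + ‖v i‖ ^ 2 := fun i => by
    simp [u, WithLp.prod_norm_sq_eq_of_L2, add_comm]
  have hne : ∀ i, u i ≠ 0 := fun i h => by
    have := hnorm i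
    rw [h, norm_zero] at this
    nlinarith [sq_nonneg ‖v i‖]
  have hdim : Fintype.card ι = finrank 𝕜 (WithLp 2 (E × 𝕜)) := by
    rw [(WithLp.linearEquiv 2 𝕜 (E × 𝕜)).finrank_eq, finrank_prod, finrank_self, hcard]
  have parseval := sum_inv_norm_sq_smul_inner_smul_eq_self hu hne hdim (WithLp.toLp 2 (x, 0))
  simpa [u, hnorm, map_sum] using congrArg (WithLp.fstₗ 2 𝕜 E 𝕜) parseval

/-- **Obtuse systems are normalized.**
If `v 1, …, v (N+1)` is an obtuse system in `ℂ^N` with `p i = 1 / (1 + ‖v i‖²)`,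
then `∑ i, p i • |v i⟩⟨v i| = I`, i.e. for every `x`,
`∑ i, p i • (⟪v i, x⟫ • v i) = x`. -/
theorem obtuse_resolution_identity (N : ℕ)
    (v : Fin (N + 1) → EuclideanSpace ℂ (Fin N))
    (hobt : ∀ i j, i ≠ j → ⟪v i, v j⟫_ℂ = -1)
    (p : Fin (N + 1) → ℝ)
    (hp : ∀ i, p i = 1 / (1 + ‖v i‖ ^ 2)) :
    ∀ x : EuclideanSpace ℂ (Fin N),
      ∑ i, (p i : ℂ) • (⟪v i, x⟫_ℂ • v i) = x := by
  intro x
  simp only [hp, one_div]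
  exact sum_inv_one_add_norm_sq_smul_inner_smul_eq_self_of_obtuse hobt (by simp) x
end

section
/- Let X be a random variable with values in C^N taking exactly N+1 distinct values v_1, ..., v_{N+1} with strictly positive probabilities p_1, ..., p_{N+1}. Then X is centered (E[X] = 0) and normalized (E[X̄^i X^j] = δ_{ij} for all i,j) if and only if {v_1, ..., v_{N+1}} is an obtuse system in C^N and p_i = 1/(1 + ‖v_i‖²) for all i. -/
open scoped BigOperators InnerProductSpace ComplexConjugate

/-!
Let `W` be the square matrix whose `i`-th row is `√pᵢ · (1, vᵢ)`. Read column by column,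
`Wᴴ W = 1` says that `∑ pᵢ = 1` and that `X` is centered and normalized; read row by row,
`W Wᴴ = 1` says that `pᵢ (1 + ‖vᵢ‖²) = 1` and `⟪vᵢ, vⱼ⟫ = -1` for `i ≠ j`. For a square matrix
the two conditions are equivalent.
-/

open Matrix

namespace ObtuseSystem

variable {ι κ : Type*}

def IsCentered [Fintype ι] (p : ι → ℝ) (v : ι → EuclideanSpace ℂ κ) : Prop :=
  ∀ k, ∑ i, (p i : ℂ) * v i k = 0

def IsNormalized [Fintype ι] [DecidableEq κ] (p : ι → ℝ) (v : ι → EuclideanSpace ℂ κ) : Prop :=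
  ∀ k l, ∑ i, (p i : ℂ) * (conj (v i k) * v i l) = if k = l then 1 else 0

def IsObtuseSystem [Fintype κ] (v : ι → EuclideanSpace ℂ κ) : Prop :=
  ∀ i j, i ≠ j → ⟪v i, v j⟫_ℂ = -1

-- Column `none` carries the constant coordinate `1`, column `some k` the `k`-th coordinate.
noncomputable def sqrtWeightMatrix (p : ι → ℝ) (v : ι → EuclideanSpace ℂ κ) :
    Matrix ι (Option κ) ℂ :=
  of fun i a => (√(p i) : ℂ) * a.elim 1 (v i)

variable {p : ι → ℝ} {v : ι → EuclideanSpace ℂ κ}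

theorem conjTranspose_sqrtWeightMatrix_mul_self_apply [Fintype ι] (hp : ∀ i, 0 ≤ p i)
    (a b : Option κ) :
    ((sqrtWeightMatrix p v)ᴴ * sqrtWeightMatrix p v) a b =
      ∑ i, (p i : ℂ) * (conj (a.elim 1 (v i)) * b.elim 1 (v i)) := by
  refine Fintype.sum_congr _ _ fun i => ?_
  have hsq : (√(p i) : ℂ) * √(p i) = p i := by
    rw [← Complex.ofReal_mul, Real.mul_self_sqrt (hp i)]
  simp only [sqrtWeightMatrix, conjTranspose_apply, of_apply, star_mul', Complex.star_def,
    Complex.conj_ofReal, ← hsq]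
  ring

theorem conjTranspose_sqrtWeightMatrix_mul_self_eq_one_iff [Fintype ι] [DecidableEq κ]
    (hp : ∀ i, 0 ≤ p i) :
    (sqrtWeightMatrix p v)ᴴ * sqrtWeightMatrix p v = 1 ↔
      ∑ i, p i = 1 ∧ IsCentered p v ∧ IsNormalized p v := by
  have hconj : ∀ k, ∑ i, (p i : ℂ) * conj (v i k) = conj (∑ i, (p i : ℂ) * v i k) := by
    simp [map_sum]
  simp only [← ext_iff, Option.forall, conjTranspose_sqrtWeightMatrix_mul_self_apply hp,
    one_apply, Option.elim, map_one, one_mul, mul_one, Option.some.injEq, reduceCtorEq, if_true,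
    if_false, hconj, map_eq_zero, IsCentered, IsNormalized]
  norm_cast
  exact ⟨fun ⟨⟨h1, h2⟩, h3⟩ => ⟨h1, h2, fun k l => (h3 k).2 l⟩,
    fun ⟨h1, h2, h3⟩ => ⟨⟨h1, h2⟩, fun k => ⟨h2 k, h3 k⟩⟩⟩

theorem sqrtWeightMatrix_mul_conjTranspose_self_apply [Fintype κ] (i j : ι) :
    (sqrtWeightMatrix p v * (sqrtWeightMatrix p v)ᴴ) i j =
      √(p i) * √(p j) * (1 + ⟪v j, v i⟫_ℂ) := by
  simp only [mul_apply, Fintype.sum_option, sqrtWeightMatrix, conjTranspose_apply, of_apply,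
    Option.elim, PiLp.inner_apply, RCLike.inner_apply, star_mul', Complex.star_def,
    Complex.conj_ofReal, map_one]
  rw [mul_add, Finset.mul_sum]
  congr 1
  · ring
  · exact Fintype.sum_congr _ _ fun _ => by ring

theorem sqrtWeightMatrix_mul_conjTranspose_self_eq_one_iff [Fintype κ] [DecidableEq ι]
    (hp : ∀ i, 0 < p i) :
    sqrtWeightMatrix p v * (sqrtWeightMatrix p v)ᴴ = 1 ↔
      IsObtuseSystem v ∧ ∀ i, p i = 1 / (1 + ‖v i‖ ^ 2) := by
  have hsqrt : ∀ i, (√(p i) : ℂ) ≠ 0 := fun i => by exact_mod_cast (Real.sqrt_pos.2 (hp i)).ne'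
  have hdiag : ∀ i, (√(p i) : ℂ) * √(p i) * (1 + ⟪v i, v i⟫_ℂ) = 1 ↔
      p i = 1 / (1 + ‖v i‖ ^ 2) := fun i => by
    rw [inner_self_eq_norm_sq_to_K, ← Complex.ofReal_mul, Real.mul_self_sqrt (hp i).le,
      eq_div_iff (by positivity), ← Complex.ofReal_inj]
    push_cast
    rfl
  simp only [← ext_iff, sqrtWeightMatrix_mul_conjTranspose_self_apply, one_apply]
  constructor
  · intro h
    refine ⟨fun i j hij => ?_, fun i => (hdiag i).1 (by simpa using h i i)⟩
    have := h j i
    rw [if_neg hij.symm, mul_eq_zero, or_iff_right (mul_ne_zero (hsqrt j) (hsqrt i))] at this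
    linear_combination this
  · rintro ⟨hobtuse, hweight⟩ i j
    split_ifs with hij
    · subst hij
      exact (hdiag i).2 (hweight i)
    · rw [hobtuse j i (Ne.symm hij)]
      ring

end ObtuseSystem

open ObtuseSystem in
theorem obtuse_random_variable_characterization_general (N : ℕ)
    (v : Fin (N + 1) → EuclideanSpace ℂ (Fin N))
    (p : Fin (N + 1) → ℝ) (hp : ∀ i, 0 < p i) (hp1 : ∑ i, p i = 1) :
    ((∀ k, ∑ i, (p i : ℂ) * v i k = 0) ∧
      (∀ k l, ∑ i, (p i : ℂ) * ((starRingEnd ℂ) (v i k) * v i l)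
        = if k = l then 1 else 0))
    ↔ ((∀ i j, i ≠ j → ⟪v i, v j⟫_ℂ = -1) ∧
        ∀ i, p i = 1 / (1 + ‖v i‖ ^ 2)) := by
  calc IsCentered p v ∧ IsNormalized p v
      ↔ (sqrtWeightMatrix p v)ᴴ * sqrtWeightMatrix p v = 1 := by
        rw [conjTranspose_sqrtWeightMatrix_mul_self_eq_one_iff fun i => (hp i).le,
          and_iff_right hp1]
    _ ↔ sqrtWeightMatrix p v * (sqrtWeightMatrix p v)ᴴ = 1 :=
        mul_eq_one_comm_of_equiv (finSuccEquiv N).symm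
    _ ↔ IsObtuseSystem v ∧ ∀ i, p i = 1 / (1 + ‖v i‖ ^ 2) :=
        sqrtWeightMatrix_mul_conjTranspose_self_eq_one_iff hp

/-- **Characterization of obtuse random variables.**
Let `X` be a `ℂ^N`-valued random variable on `Ω = {1,…,N+1}`, taking the `N+1`
distinct values `v i` with strictly positive probabilities `p i`.  Then `X` is
centered and normalized if and only if `{v i}` is an obtuse system in `ℂ^N` and
`p i = 1 / (1 + ‖v i‖²)` for all `i`. -/
theorem obtuse_random_variable_characterization (N : ℕ)
    (v : Fin (N + 1) → EuclideanSpace ℂ (Fin N)) (hv : Function.Injective v)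
    (p : Fin (N + 1) → ℝ) (hp : ∀ i, 0 < p i) (hp1 : ∑ i, p i = 1) :
    ((∀ k, ∑ i, (p i : ℂ) * v i k = 0) ∧
      (∀ k l, ∑ i, (p i : ℂ) * ((starRingEnd ℂ) (v i k) * v i l)
        = if k = l then 1 else 0))
    ↔ ((∀ i j, i ≠ j → ⟪v i, v j⟫_ℂ = -1) ∧
        ∀ i, p i = 1 / (1 + ‖v i‖ ^ 2)) :=
  obtuse_random_variable_characterization_general N v p hp hp1
end

section
/- Let X be a random variable in C^N taking exactly N+1 values v_1, ..., v_{N+1} with positive probabilities p_1, ..., p_{N+1}. Then X is centered and normalized if and only if the (N+1)×(N+1) complex matrix with entries √(p_j) · v̂_j^i (where v̂_j = (1, v_j) ∈ C^{N+1}) is unitary. -/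
open scoped BigOperators InnerProductSpace ComplexConjugate

/-- **Unitarity characterization of obtuse random variables.**
Let `X` take the `N+1` distinct values `v j ∈ ℂ^N` with positive probabilities
`p j`.  Then `X` is centered and normalized if and only if the `(N+1)×(N+1)`
matrix with entries `√(p j) · v̂ j i` (where `v̂ j = (1, v j)`) is unitary. -/
theorem obtuse_iff_matrix_unitary (N : ℕ)
    (v : Fin (N + 1) → EuclideanSpace ℂ (Fin N)) (hv : Function.Injective v)
    (p : Fin (N + 1) → ℝ) (hp : ∀ i, 0 < p i) (hp1 : ∑ i, p i = 1)
    (M : Matrix (Fin (N + 1)) (Fin (N + 1)) ℂ)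
    (hM : ∀ i j, M i j = (Real.sqrt (p j) : ℂ) * (Fin.cons 1 (fun k => v j k) : Fin (N + 1) → ℂ) i) :
    ((∀ k, ∑ i, (p i : ℂ) * v i k = 0) ∧
      (∀ k l, ∑ i, (p i : ℂ) * ((starRingEnd ℂ) (v i k) * v i l)
        = if k = l then 1 else 0))
    ↔ M ∈ Matrix.unitaryGroup (Fin (N + 1)) ℂ := by
  classical
  rw [Matrix.mem_unitaryGroup_iff]
  have hent : ∀ k l, (M * star M) k l
      = ∑ j, (p j : ℂ) *
          ((Fin.cons 1 (fun m => v j m) : Fin (N + 1) → ℂ) k *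
            (starRingEnd ℂ) ((Fin.cons 1 (fun m => v j m) : Fin (N + 1) → ℂ) l)) := by
    intro k l
    rw [Matrix.mul_apply]
    refine Finset.sum_congr rfl fun j _ => ?_
    have h1 : ((Real.sqrt (p j) : ℝ) : ℂ) * ((Real.sqrt (p j) : ℝ) : ℂ) = (p j : ℂ) := by
      rw [← Complex.ofReal_mul, Real.mul_self_sqrt (hp j).le]
    rw [Matrix.star_apply, hM k j, hM l j]
    simp only [star_mul', Complex.star_def, Complex.conj_ofReal]
    calc ((Real.sqrt (p j) : ℝ) : ℂ) * _ * (((Real.sqrt (p j) : ℝ) : ℂ) * _)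
        = (((Real.sqrt (p j) : ℝ) : ℂ) * ((Real.sqrt (p j) : ℝ) : ℂ)) *
            ((Fin.cons 1 (fun m => v j m) : Fin (N + 1) → ℂ) k *
              (starRingEnd ℂ) ((Fin.cons 1 (fun m => v j m) : Fin (N + 1) → ℂ) l)) := by ring
      _ = _ := by rw [h1]
  constructor
  · rintro ⟨hc, hn⟩
    ext k l
    rw [hent, Matrix.one_apply]
    induction k using Fin.cases with
    | zero =>
      induction l using Fin.cases with
      | zero =>
        simp only [Fin.cons_zero, map_one, mul_one]
        have h2 : ∑ j, (p j : ℂ) = ((∑ j, p j : ℝ) : ℂ) := by push_cast; rfl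
        rw [h2, hp1]
        simp
      | succ m =>
        simp only [Fin.cons_zero, Fin.cons_succ, one_mul]
        rw [if_neg (Fin.succ_ne_zero m).symm]
        have hconj : ∑ j, (p j : ℂ) * (starRingEnd ℂ) (v j m)
            = (starRingEnd ℂ) (∑ j, (p j : ℂ) * v j m) := by
          rw [map_sum]
          exact Finset.sum_congr rfl fun j _ => by rw [map_mul, Complex.conj_ofReal]
        rw [hconj, hc m, map_zero]
    | succ m =>
      induction l using Fin.cases with
      | zero =>
        simp only [Fin.cons_zero, Fin.cons_succ, map_one, mul_one]
        rw [if_neg (Fin.succ_ne_zero m), hc m]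
      | succ m' =>
        simp only [Fin.cons_succ]
        have := hn m' m
        rw [show (∑ j, (p j : ℂ) * (v j m * (starRingEnd ℂ) (v j m')))
            = ∑ j, (p j : ℂ) * ((starRingEnd ℂ) (v j m') * v j m) from
          Finset.sum_congr rfl fun j _ => by ring, this]
        simp [Fin.succ_inj, eq_comm]
  · intro h
    have key : ∀ k l, (∑ j, (p j : ℂ) *
          ((Fin.cons 1 (fun m => v j m) : Fin (N + 1) → ℂ) k *
            (starRingEnd ℂ) ((Fin.cons 1 (fun m => v j m) : Fin (N + 1) → ℂ) l)))
        = if k = l then 1 else 0 := by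
      intro k l
      rw [← hent, h, Matrix.one_apply]
    constructor
    · intro k
      have := key k.succ 0
      simpa [Fin.cons_succ, Fin.cons_zero, Fin.succ_ne_zero] using this
    · intro k l
      have := key l.succ k.succ
      simp only [Fin.cons_succ, Fin.succ_inj] at this
      rw [show (if k = l then (1:ℂ) else 0) = if l = k then 1 else 0 by simp [eq_comm], ← this]
      exact Finset.sum_congr rfl fun j _ => by ring
end

section
/- Let X be an obtuse random variable in C^N with probabilities p_1, ..., p_{N+1}, and let Y be another C^N-valued random variable on the same probability space. Then Y is an obtuse random variable with the same probabilities if and only if there exists a unitary operator U on C^N with Y = U X. -/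
/-!
Centering, normalization and `∑ pᵢ = 1` say that the `N + 1` rows of the square matrix with
columns `√pᵢ (1, vᵢ) ∈ ℂ^{N+1}` are orthonormal; hence so are its columns:
`pᵢ (1 + ⟪vᵢ, vⱼ⟫) = δᵢⱼ`. So the Gram matrix of the values of an obtuse random variable is
determined by the probabilities alone, and two families with the same Gram matrix, one of
them spanning, differ by a unitary.
-/

open scoped BigOperators InnerProductSpace ComplexConjugate

open Finset Matrix

variable {𝕜 E F ι : Type*} [RCLike 𝕜] [Fintype ι]

section Centered

variable [AddCommMonoid E] [Module 𝕜 E] [AddCommMonoid F] [Module 𝕜 F]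

variable (𝕜) in
def IsCentered (p : ι → ℝ) (v : ι → E) : Prop :=
  ∑ i, (p i : 𝕜) • v i = 0

theorem IsCentered.map {p : ι → ℝ} {v : ι → E} (hv : IsCentered 𝕜 p v) (f : E →ₗ[𝕜] F) :
    IsCentered 𝕜 p (fun i => f (v i)) := by
  rw [IsCentered, ← map_zero f, ← hv, map_sum]
  simp_rw [map_smul]

end Centered

section InnerProductSpace

variable [NormedAddCommGroup E] [InnerProductSpace 𝕜 E] [NormedAddCommGroup F]
  [InnerProductSpace 𝕜 F]

variable (𝕜) in
/-- The normalization `𝔼[X X*] = 1`, as the resolution of the identity `∑ pᵢ |vᵢ⟩⟨vᵢ| = 1`. -/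
def IsNormalized (p : ι → ℝ) (v : ι → E) : Prop :=
  ∀ x, ∑ i, (p i : 𝕜) • ⟪v i, x⟫_𝕜 • v i = x

theorem IsNormalized.map {p : ι → ℝ} {v : ι → E} (hv : IsNormalized 𝕜 p v) (U : E ≃ₗᵢ[𝕜] F) :
    IsNormalized 𝕜 p (fun i => U (v i)) := fun x => by
  conv_rhs => rw [← U.apply_symm_apply x, ← hv (U.symm x)]
  simp_rw [map_sum, map_smul, ← U.inner_map_map, U.apply_symm_apply]

theorem IsNormalized.span_eq_top {p : ι → ℝ} {v : ι → E} (hv : IsNormalized 𝕜 p v) :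
    Submodule.span 𝕜 (Set.range v) = ⊤ :=
  Submodule.eq_top_iff'.2 fun x => hv x ▸ Submodule.sum_mem _ fun i _ =>
    Submodule.smul_mem _ _ (Submodule.smul_mem _ _ (Submodule.subset_span ⟨i, rfl⟩))

theorem inner_fintypeLinearCombination_eq {v w : ι → E}
    (h : ∀ i j, ⟪v i, v j⟫_𝕜 = ⟪w i, w j⟫_𝕜) (c d : ι → 𝕜) :
    ⟪Fintype.linearCombination 𝕜 v c, Fintype.linearCombination 𝕜 v d⟫_𝕜 =
      ⟪Fintype.linearCombination 𝕜 w c, Fintype.linearCombination 𝕜 w d⟫_𝕜 := by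
  simp only [Fintype.linearCombination_apply, sum_inner, inner_sum, inner_smul_left,
    inner_smul_right, h]

/-- The Gram condition makes `∑ cᵢ vᵢ ↦ ∑ cᵢ wᵢ` well defined and isometric; finite dimension
makes it onto. -/
theorem exists_linearIsometryEquiv_apply_eq_of_inner_eq [FiniteDimensional 𝕜 E] {v w : ι → E}
    (hv : Submodule.span 𝕜 (Set.range v) = ⊤) (h : ∀ i j, ⟪v i, v j⟫_𝕜 = ⟪w i, w j⟫_𝕜) :
    ∃ U : E ≃ₗᵢ[𝕜] E, ∀ i, U (v i) = w i := by
  classical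
  set f := Fintype.linearCombination 𝕜 v
  set g := Fintype.linearCombination 𝕜 w
  have hf : Function.Surjective f := by
    rwa [← LinearMap.range_eq_top, Fintype.range_linearCombination]
  have hker : LinearMap.ker f ≤ LinearMap.ker g := fun c hc => by
    rw [LinearMap.mem_ker, ← inner_self_eq_zero (𝕜 := 𝕜), ← inner_fintypeLinearCombination_eq h,
      LinearMap.mem_ker.1 hc, inner_zero_left]
  set U₀ := (LinearMap.ker f).liftQ g hker ∘ₗ (f.quotKerEquivOfSurjective hf).symm.toLinearMap
  have hU₀ (c : ι → 𝕜) : U₀ (f c) = g c := by simp [U₀]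
  have hU₀_inner (x y : E) : ⟪U₀ x, U₀ y⟫_𝕜 = ⟪x, y⟫_𝕜 := by
    obtain ⟨c, rfl⟩ := hf x
    obtain ⟨d, rfl⟩ := hf y
    rw [hU₀, hU₀, inner_fintypeLinearCombination_eq h]
  refine ⟨(U₀.isometryOfInner hU₀_inner).toLinearIsometryEquiv rfl, fun i => ?_⟩
  simpa [f, g] using hU₀ (Pi.single i 1)

end InnerProductSpace

section Coordinates

variable {n : Type*} {p : ι → ℝ} {v : ι → EuclideanSpace 𝕜 n}

theorem isCentered_iff_forall_sum_apply :
    IsCentered 𝕜 p v ↔ ∀ k, ∑ i, (p i : 𝕜) * v i k = 0 := by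
  simp only [IsCentered, PiLp.ext_iff, WithLp.ofLp_sum, Finset.sum_apply, PiLp.smul_apply,
    smul_eq_mul, PiLp.zero_apply]

variable [Fintype n] [DecidableEq n]

theorem isNormalized_iff_forall_sum_apply :
    IsNormalized 𝕜 p v ↔
      ∀ k l, ∑ i, (p i : 𝕜) * (conj (v i k) * v i l) = if k = l then 1 else 0 := by
  have apply_eq (x : EuclideanSpace 𝕜 n) (l : n) :
      (∑ i, (p i : 𝕜) • ⟪v i, x⟫_𝕜 • v i) l =
        ∑ k, x k * ∑ i, (p i : 𝕜) * (conj (v i k) * v i l) := by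
    simp only [WithLp.ofLp_sum, Finset.sum_apply, PiLp.smul_apply, smul_eq_mul,
      PiLp.inner_apply, RCLike.inner_apply', Finset.mul_sum, Finset.sum_mul]
    rw [Finset.sum_comm]
    exact Finset.sum_congr rfl fun _ _ => Finset.sum_congr rfl fun _ _ => by ring
  constructor
  · intro h k l
    have := congrArg (· l) (h (EuclideanSpace.single k 1))
    simp only [apply_eq, PiLp.single_apply] at this
    simpa [eq_comm] using this
  · intro h x
    ext l
    rw [apply_eq]
    simp [h]

theorem mul_one_add_inner_eq_ite [DecidableEq ι] (hcard : Fintype.card ι = Fintype.card n + 1)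
    (hp1 : ∑ i, p i = 1) (hc : ∀ k, ∑ i, (p i : 𝕜) * v i k = 0)
    (hn : ∀ k l, ∑ i, (p i : 𝕜) * (conj (v i k) * v i l) = if k = l then 1 else 0) (i j : ι) :
    (p i : 𝕜) * (1 + ⟪v i, v j⟫_𝕜) = if i = j then 1 else 0 := by
  let B : Matrix (Option n) ι 𝕜 := of fun r i => r.elim 1 (v i)
  let C : Matrix ι (Option n) 𝕜 := of fun i r => p i * conj (B r i)
  have hrows : B * C = 1 := by
    ext (_ | k) (_ | l)
    · simpa [B, C, mul_apply] using (by exact_mod_cast hp1 : ∑ i, (p i : 𝕜) = 1)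
    · simpa [B, C, mul_apply, mul_comm] using congrArg conj (hc l)
    · simpa [B, C, mul_apply, mul_comm] using hc k
    · simpa [B, C, mul_apply, one_apply, mul_comm, mul_left_comm, mul_assoc, eq_comm] using hn l k
  have hcols := (mul_eq_one_comm_of_card_eq _ _ _ (by simp [hcard])).1 hrows
  simpa [B, C, mul_apply, Fintype.sum_option, PiLp.inner_apply, RCLike.inner_apply, one_apply,
    mul_add, mul_sum, mul_comm, mul_left_comm, mul_assoc] using congrFun₂ hcols i j

theorem inner_eq_ite_sub_one [DecidableEq ι] (hcard : Fintype.card ι = Fintype.card n + 1)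
    (hp1 : ∑ i, p i = 1) (hc : ∀ k, ∑ i, (p i : 𝕜) * v i k = 0)
    (hn : ∀ k l, ∑ i, (p i : 𝕜) * (conj (v i k) * v i l) = if k = l then 1 else 0) {i : ι}
    (hpi : p i ≠ 0) (j : ι) :
    ⟪v i, v j⟫_𝕜 = (if i = j then (p i : 𝕜)⁻¹ else 0) - 1 := by
  have hpi' : (p i : 𝕜) ≠ 0 := RCLike.ofReal_ne_zero.2 hpi
  rw [eq_sub_iff_add_eq, add_comm, ← mul_right_inj' hpi', mul_one_add_inner_eq_ite hcard hp1 hc hn]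
  split_ifs <;> simp [hpi']

end Coordinates

/-- **Uniqueness of obtuse random variables up to unitaries.**
Let `X` be an obtuse random variable in `ℂ^N` taking the values `v i` with positive
probabilities `p i`, and let `Y` be another `ℂ^N`-valued random variable on the same
probability space, with values `w i`.  Then `Y` is an obtuse random variable with the
same probabilities if and only if there is a unitary `U` of `ℂ^N` with `Y = U X`. -/
theorem obtuse_unique_up_to_unitary (N : ℕ)
    (v : Fin (N + 1) → EuclideanSpace ℂ (Fin N)) (hv : Function.Injective v)
    (p : Fin (N + 1) → ℝ) (hp : ∀ i, 0 < p i) (hp1 : ∑ i, p i = 1)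
    (hc : ∀ k, ∑ i, (p i : ℂ) * v i k = 0)
    (hn : ∀ k l, ∑ i, (p i : ℂ) * ((starRingEnd ℂ) (v i k) * v i l)
        = if k = l then 1 else 0)
    (w : Fin (N + 1) → EuclideanSpace ℂ (Fin N)) :
    (Function.Injective w ∧
      (∀ k, ∑ i, (p i : ℂ) * w i k = 0) ∧
      (∀ k l, ∑ i, (p i : ℂ) * ((starRingEnd ℂ) (w i k) * w i l)
        = if k = l then 1 else 0))
    ↔ ∃ U : EuclideanSpace ℂ (Fin N) ≃ₗᵢ[ℂ] EuclideanSpace ℂ (Fin N),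
        ∀ i, w i = U (v i) := by
  have hcard : Fintype.card (Fin (N + 1)) = Fintype.card (Fin N) + 1 := by simp
  constructor
  · rintro ⟨-, hwc, hwn⟩
    obtain ⟨U, hU⟩ := exists_linearIsometryEquiv_apply_eq_of_inner_eq (w := w)
      (isNormalized_iff_forall_sum_apply.2 hn).span_eq_top fun i j => by
        rw [inner_eq_ite_sub_one hcard hp1 hc hn (hp i).ne',
          inner_eq_ite_sub_one hcard hp1 hwc hwn (hp i).ne']
    exact ⟨U, fun i => (hU i).symm⟩
  · rintro ⟨U, hU⟩
    obtain rfl : w = fun i => U (v i) := funext hU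
    exact ⟨U.injective.comp hv,
      isCentered_iff_forall_sum_apply.1 ((isCentered_iff_forall_sum_apply.2 hc).map U.toLinearMap),
      isNormalized_iff_forall_sum_apply.1 ((isNormalized_iff_forall_sum_apply.2 hn).map U)⟩
end

section
/- Let X be a centered normalized random variable in C^d taking n ≥ d+1 distinct values with probabilities p_1, ..., p_n, and let Y be an obtuse random variable on C^{n-1} (on the same probability space) with the same probabilities. Then there exists a linear map A : C^{n-1} → C^d satisfying A A* = I_d (a coisometry) such that X = A Y. -/
/-!
Let `W` be the matrix whose columns are the values `w i` of `Y`, `R` the constant row `1`, and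
`P = diag p`. Obtuseness of `Y` says that the square matrix `fromRows R W` satisfies
`(fromRows R W) P (fromRows R W)ᴴ = 1`; a one-sided inverse of a square matrix is two-sided, so
`P (RᴴR + WᴴW) = 1`, i.e. `p i * (1 + ⟪w i, w j⟫) = δ i j`. With `V` the matrix of values of `X`,
the coisometry is `A = V P Wᴴ = 𝔼[X Y*]`: then `A W = V - (V P Rᴴ) R = V` since `X` is centered,
and `A Aᴴ = A (W P Wᴴ) Aᴴ = V P Vᴴ = 1` since `X` and `Y` are normalized.
-/

namespace Matrix

variable {ι κ ρ δ α : Type*} [Fintype ι] [CommRing α] [StarRing α]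

theorem mul_diagonal_mul_conjTranspose_apply [DecidableEq ι] (U : Matrix κ ι α)
    (U' : Matrix δ ι α) (p : ι → α) (k : κ) (l : δ) :
    (U * diagonal p * U'ᴴ) k l = ∑ i, p i * (star (U' l i) * U k i) := by
  rw [mul_apply]
  simp only [mul_diagonal, conjTranspose_apply]
  exact Finset.sum_congr rfl fun i _ => by ring

variable {R : Matrix ρ ι α} {W : Matrix κ ι α} {P : Matrix ι ι α}

theorem mul_conjTranspose_mul_add_conjTranspose_mul_eq_one [Fintype κ] [Fintype ρ]
    [DecidableEq ι] [DecidableEq κ] [DecidableEq ρ] (hP : P.IsHermitian)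
    (hcard : Fintype.card ρ + Fintype.card κ = Fintype.card ι)
    (hRR : R * P * Rᴴ = 1) (hWR : W * P * Rᴴ = 0) (hWW : W * P * Wᴴ = 1) :
    P * (Rᴴ * R + Wᴴ * W) = 1 := by
  have hRW : R * P * Wᴴ = 0 := by
    simpa [Matrix.mul_assoc, hP.eq] using congrArg conjTranspose hWR
  have hright : fromRows R W * (P * (fromRows R W)ᴴ) = 1 := by
    rw [← Matrix.mul_assoc, fromRows_mul, conjTranspose_fromRows_eq_fromCols_conjTranspose,
      fromRows_mul_fromCols, hRR, hRW, hWR, hWW, fromBlocks_one]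
  have hleft := (mul_eq_one_comm_of_card_eq _ _ _ (by simpa using hcard)).mp hright
  rwa [Matrix.mul_assoc, conjTranspose_fromRows_eq_fromCols_conjTranspose,
    fromCols_mul_fromRows] at hleft

theorem mul_mul_conjTranspose_mul_eq_self [Fintype κ] [Fintype ρ] [DecidableEq ι]
    {V : Matrix δ ι α} (hcompl : P * (Rᴴ * R + Wᴴ * W) = 1) (hVR : V * P * Rᴴ = 0) :
    V * P * Wᴴ * W = V :=
  calc V * P * Wᴴ * W = V * P * Rᴴ * R + V * P * Wᴴ * W := by rw [hVR, Matrix.zero_mul, zero_add]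
    _ = V * (P * (Rᴴ * R + Wᴴ * W)) := by simp only [Matrix.mul_add, Matrix.mul_assoc]
    _ = V := by rw [hcompl, Matrix.mul_one]

theorem mul_conjTranspose_eq_one_of_mul_eq [Fintype κ] [DecidableEq κ] [DecidableEq δ]
    {A : Matrix δ κ α} {V : Matrix δ ι α}
    (hWW : W * P * Wᴴ = 1) (hVV : V * P * Vᴴ = 1) (hAW : A * W = V) : A * Aᴴ = 1 :=
  calc A * Aᴴ = A * (W * P * Wᴴ) * Aᴴ := by rw [hWW, Matrix.mul_one]
    _ = A * W * P * (A * W)ᴴ := by simp only [conjTranspose_mul, Matrix.mul_assoc]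
    _ = 1 := by rw [hAW, hVV]

end Matrix

open Matrix

section valuesMatrix

variable {ι κ : Type*} [Fintype ι] [DecidableEq ι]

def valuesMatrix (u : ι → EuclideanSpace ℂ κ) : Matrix κ ι ℂ :=
  of fun k i => u i k

theorem valuesMatrix_mul_diagonal_mul_conjTranspose_replicateRow_eq_zero (p : ι → ℝ)
    (u : ι → EuclideanSpace ℂ κ) (hu : ∀ k, ∑ i, (p i : ℂ) * u i k = 0) :
    valuesMatrix u * diagonal (fun i => (p i : ℂ)) * (replicateRow Unit (1 : ι → ℂ))ᴴ = 0 := by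
  ext k
  rw [mul_diagonal_mul_conjTranspose_apply]
  simpa [valuesMatrix] using hu k

theorem valuesMatrix_mul_diagonal_mul_conjTranspose_self_eq_one [DecidableEq κ] (p : ι → ℝ)
    (u : ι → EuclideanSpace ℂ κ)
    (hu : ∀ k l, ∑ i, (p i : ℂ) * ((starRingEnd ℂ) (u i k) * u i l) = if k = l then 1 else 0) :
    valuesMatrix u * diagonal (fun i => (p i : ℂ)) * (valuesMatrix u)ᴴ = 1 := by
  ext k l
  rw [mul_diagonal_mul_conjTranspose_apply, one_apply]
  simpa [valuesMatrix, eq_comm] using hu l k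

end valuesMatrix

theorem centered_normalized_factors_through_obtuse_general (d n : ℕ)
    (p : Fin n → ℝ) (hp1 : ∑ i, p i = 1)
    (v : Fin n → EuclideanSpace ℂ (Fin d))
    (hcX : ∀ k, ∑ i, (p i : ℂ) * v i k = 0)
    (hnX : ∀ k l, ∑ i, (p i : ℂ) * ((starRingEnd ℂ) (v i k) * v i l)
        = if k = l then 1 else 0)
    (w : Fin n → EuclideanSpace ℂ (Fin (n - 1)))
    (hcY : ∀ k, ∑ i, (p i : ℂ) * w i k = 0)
    (hnY : ∀ k l, ∑ i, (p i : ℂ) * ((starRingEnd ℂ) (w i k) * w i l)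
        = if k = l then 1 else 0) :
    ∃ A : EuclideanSpace ℂ (Fin (n - 1)) →ₗ[ℂ] EuclideanSpace ℂ (Fin d),
      A ∘ₗ LinearMap.adjoint A = LinearMap.id ∧ ∀ i, v i = A (w i) := by
  set P : Matrix (Fin n) (Fin n) ℂ := diagonal fun i => (p i : ℂ)
  set R : Matrix Unit (Fin n) ℂ := replicateRow Unit 1
  have hcard : Fintype.card Unit + Fintype.card (Fin (n - 1)) = Fintype.card (Fin n) := by
    rcases n with _ | n
    · simp at hp1
    · simp [add_comm]
  have hP : P.IsHermitian := isHermitian_diagonal_iff.mpr fun i => Complex.conj_ofReal (p i)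
  have hRR : R * P * Rᴴ = 1 := by
    ext
    rw [mul_diagonal_mul_conjTranspose_apply]
    simp [R, ← Complex.ofReal_sum, hp1]
  have hWW := valuesMatrix_mul_diagonal_mul_conjTranspose_self_eq_one p w hnY
  set A := valuesMatrix v * P * (valuesMatrix w)ᴴ
  have hAW : A * valuesMatrix w = valuesMatrix v := mul_mul_conjTranspose_mul_eq_self
    (mul_conjTranspose_mul_add_conjTranspose_mul_eq_one hP hcard hRR
      (valuesMatrix_mul_diagonal_mul_conjTranspose_replicateRow_eq_zero p w hcY) hWW)
    (valuesMatrix_mul_diagonal_mul_conjTranspose_replicateRow_eq_zero p v hcX)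
  refine ⟨toEuclideanLin A, ?_, fun i => ?_⟩
  · rw [← toEuclideanLin_conjTranspose_eq_adjoint, ← toLpLin_mul_same,
      mul_conjTranspose_eq_one_of_mul_eq hWW
        (valuesMatrix_mul_diagonal_mul_conjTranspose_self_eq_one p v hnX) hAW, toLpLin_one]
  · ext k
    change valuesMatrix v k i = (A *ᵥ WithLp.ofLp (w i)) k
    rw [← hAW]
    rfl

/-- **Obtuse random variables generate all centered normalized random variables.**
Let `X` be a centered normalized random variable in `ℂ^d` taking `n ≥ d+1` distinct
values `v i` with positive probabilities `p i`, and let `Y` be an obtuse random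
variable in `ℂ^{n-1}` on the same probability space with values `w i` and the same
probabilities.  Then there is a linear map `A : ℂ^{n-1} → ℂ^d` with `A A* = I`
(a coisometry) such that `X = A Y`. -/
theorem centered_normalized_factors_through_obtuse (d n : ℕ) (hn : n ≥ d + 1)
    (p : Fin n → ℝ) (hp : ∀ i, 0 < p i) (hp1 : ∑ i, p i = 1)
    (v : Fin n → EuclideanSpace ℂ (Fin d)) (hv : Function.Injective v)
    (hcX : ∀ k, ∑ i, (p i : ℂ) * v i k = 0)
    (hnX : ∀ k l, ∑ i, (p i : ℂ) * ((starRingEnd ℂ) (v i k) * v i l)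
        = if k = l then 1 else 0)
    (w : Fin n → EuclideanSpace ℂ (Fin (n - 1))) (hw : Function.Injective w)
    (hcY : ∀ k, ∑ i, (p i : ℂ) * w i k = 0)
    (hnY : ∀ k l, ∑ i, (p i : ℂ) * ((starRingEnd ℂ) (w i k) * w i l)
        = if k = l then 1 else 0) :
    ∃ A : EuclideanSpace ℂ (Fin (n - 1)) →ₗ[ℂ] EuclideanSpace ℂ (Fin d),
      A ∘ₗ LinearMap.adjoint A = LinearMap.id ∧ ∀ i, v i = A (w i) :=
  centered_normalized_factors_through_obtuse_general d n p hp1 v hcX hnX w hcY hnY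
end

section
/- Let X be an obtuse random variable in C^N, with X^0 denoting the constant random variable 1. Then there exists a unique 3-tensor S on C^{N+1} such that X^i X^j = ∑_{k=0}^N S^{ij}_k X^k almost surely for all i, j = 0, ..., N, and it is given by S^{ij}_k = E[X^i X^j conj(X^k)]. -/
open scoped BigOperators InnerProductSpace ComplexConjugate

/-- The extended coordinate vector of an obtuse random variable at the sample point
`ω`: `X^0 = 1` together with the coordinates of the value `v ω ∈ ℂ^N`. -/
def hatv {N : ℕ} (v : Fin (N + 1) → EuclideanSpace ℂ (Fin N))
    (ω : Fin (N + 1)) : Fin (N + 1) → ℂ :=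
  Fin.cons 1 (fun k => v ω k)

/-- The 3-tensor of an obtuse random variable: `S^{ij}_k = E[X^i X^j conj(X^k)]`. -/
noncomputable def tensorS {N : ℕ} (p : Fin (N + 1) → ℝ)
    (v : Fin (N + 1) → EuclideanSpace ℂ (Fin N)) (i j k : Fin (N + 1)) : ℂ :=
  ∑ ω, (p ω : ℂ) * (hatv v ω i * hatv v ω j * (starRingEnd ℂ) (hatv v ω k))

/-!
The functions `X^0 = 1, X^1, …, X^N` are orthonormal in `L²(P)`, and `L²(P)` has dimension
`N + 1` because `X` takes `N + 1` values, so they form an orthonormal basis. Hence every random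
variable, in particular `X^i X^j`, is the sum of its Fourier expansion
`∑ k, E[X^i X^j conj(X^k)] X^k`, and the coefficients of such an expansion are unique.
-/

section WeightedOrthonormal

variable {R Ω κ : Type*} [CommRing R] [StarRing R] [Fintype Ω] [Fintype κ] [DecidableEq κ]
  {d : Ω → R} {e : Ω → κ → R}

theorem eq_sum_weighted_conj_mul_sum_of_orthonormal
    (hortho : ∀ k l, ∑ ω, d ω * (conj (e ω k) * e ω l) = if k = l then 1 else 0)
    (c : κ → R) (k : κ) :
    c k = ∑ ω, d ω * (conj (e ω k) * ∑ l, c l * e ω l) := by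
  calc c k = ∑ l, c l * if k = l then 1 else 0 := by simp
    _ = ∑ l, c l * ∑ ω, d ω * (conj (e ω k) * e ω l) := by simp only [hortho]
    _ = ∑ ω, d ω * (conj (e ω k) * ∑ l, c l * e ω l) := by
      simp only [Finset.mul_sum]
      rw [Finset.sum_comm]
      exact Finset.sum_congr rfl fun _ _ => Finset.sum_congr rfl fun _ _ => by ring

theorem eq_of_sum_mul_eq_of_orthonormal
    (hortho : ∀ k l, ∑ ω, d ω * (conj (e ω k) * e ω l) = if k = l then 1 else 0)
    {c c' : κ → R} (h : ∀ ω, ∑ l, c l * e ω l = ∑ l, c' l * e ω l) : c = c' := by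
  funext k
  rw [eq_sum_weighted_conj_mul_sum_of_orthonormal hortho c,
    eq_sum_weighted_conj_mul_sum_of_orthonormal hortho c']
  simp only [h]

variable [DecidableEq Ω]

theorem sum_weighted_conj_mul_eq_of_orthonormal (hcard : Fintype.card κ = Fintype.card Ω)
    (hortho : ∀ k l, ∑ ω, d ω * (conj (e ω k) * e ω l) = if k = l then 1 else 0)
    (ω ω' : Ω) :
    ∑ k, d ω' * (conj (e ω' k) * e ω k) = if ω = ω' then 1 else 0 := by
  let A : Matrix Ω κ R := Matrix.of e
  let B : Matrix κ Ω R := Matrix.of fun k ω => d ω * conj (e ω k)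
  have hBA : B * A = 1 := by
    ext k l
    simpa [A, B, Matrix.mul_apply, Matrix.one_apply, mul_assoc] using hortho k l
  have hAB : A * B = 1 := (Matrix.mul_eq_one_comm_of_card_eq _ _ _ hcard.symm).mpr hBA
  simpa [A, B, Matrix.mul_apply, Matrix.one_apply, mul_comm, mul_left_comm] using
    congrFun (congrFun hAB ω) ω'

theorem eq_sum_fourier_of_orthonormal (hcard : Fintype.card κ = Fintype.card Ω)
    (hortho : ∀ k l, ∑ ω, d ω * (conj (e ω k) * e ω l) = if k = l then 1 else 0)
    (f : Ω → R) (ω : Ω) :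
    f ω = ∑ k, (∑ ω', d ω' * (f ω' * conj (e ω' k))) * e ω k := by
  calc f ω = ∑ ω', f ω' * if ω = ω' then 1 else 0 := by simp
    _ = ∑ ω', f ω' * ∑ k, d ω' * (conj (e ω' k) * e ω k) := by
      simp only [sum_weighted_conj_mul_eq_of_orthonormal hcard hortho]
    _ = ∑ k, (∑ ω', d ω' * (f ω' * conj (e ω' k))) * e ω k := by
      simp only [Finset.mul_sum, Finset.sum_mul]
      rw [Finset.sum_comm]
      exact Finset.sum_congr rfl fun _ _ => Finset.sum_congr rfl fun _ _ => by ring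

end WeightedOrthonormal

theorem hatv_orthonormal {N : ℕ} {v : Fin (N + 1) → EuclideanSpace ℂ (Fin N)}
    {p : Fin (N + 1) → ℝ} (hp1 : ∑ i, p i = 1)
    (hc : ∀ k, ∑ i, (p i : ℂ) * v i k = 0)
    (hn : ∀ k l, ∑ i, (p i : ℂ) * (conj (v i k) * v i l) = if k = l then 1 else 0)
    (k l : Fin (N + 1)) :
    ∑ ω, (p ω : ℂ) * (conj (hatv v ω k) * hatv v ω l) = if k = l then 1 else 0 := by
  induction k using Fin.cases with
  | zero =>
    induction l using Fin.cases with
    | zero => simp [hatv, ← Complex.ofReal_sum, hp1]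
    | succ l => simpa [hatv, (Fin.succ_ne_zero l).symm] using hc l
  | succ k =>
    induction l using Fin.cases with
    | zero =>
      simpa [hatv, Fin.succ_ne_zero k, mul_comm] using congrArg conj (hc k)
    | succ l => simpa [hatv] using hn k l

theorem obtuse_tensor_exists_unique_general (N : ℕ)
    (v : Fin (N + 1) → EuclideanSpace ℂ (Fin N))
    (p : Fin (N + 1) → ℝ) (hp1 : ∑ i, p i = 1)
    (hc : ∀ k, ∑ i, (p i : ℂ) * v i k = 0)
    (hn : ∀ k l, ∑ i, (p i : ℂ) * ((starRingEnd ℂ) (v i k) * v i l)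
        = if k = l then 1 else 0) :
    (∀ i j ω, hatv v ω i * hatv v ω j = ∑ k, tensorS p v i j k * hatv v ω k) ∧
      (∀ S : Fin (N + 1) → Fin (N + 1) → Fin (N + 1) → ℂ,
        (∀ i j ω, hatv v ω i * hatv v ω j = ∑ k, S i j k * hatv v ω k) →
          S = tensorS p v) := by
  have hortho := hatv_orthonormal hp1 hc hn
  have hexpand : ∀ i j ω, hatv v ω i * hatv v ω j = ∑ k, tensorS p v i j k * hatv v ω k :=
    fun i j => eq_sum_fourier_of_orthonormal rfl hortho (fun ω => hatv v ω i * hatv v ω j)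
  refine ⟨hexpand, fun S hS => ?_⟩
  funext i j
  exact eq_of_sum_mul_eq_of_orthonormal hortho fun ω => (hS i j ω).symm.trans (hexpand i j ω)

/-- **Existence and uniqueness of the associated 3-tensor.**
For an obtuse random variable `X` in `ℂ^N` (with `X^0 = 1`), there is a unique
3-tensor `S` on `ℂ^{N+1}` with `X^i X^j = ∑ k, S^{ij}_k X^k` almost surely, and it
is given by `S^{ij}_k = E[X^i X^j conj(X^k)]`. -/
theorem obtuse_tensor_exists_unique (N : ℕ)
    (v : Fin (N + 1) → EuclideanSpace ℂ (Fin N)) (hv : Function.Injective v)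
    (p : Fin (N + 1) → ℝ) (hp : ∀ i, 0 < p i) (hp1 : ∑ i, p i = 1)
    (hc : ∀ k, ∑ i, (p i : ℂ) * v i k = 0)
    (hn : ∀ k l, ∑ i, (p i : ℂ) * ((starRingEnd ℂ) (v i k) * v i l)
        = if k = l then 1 else 0) :
    (∀ i j ω, hatv v ω i * hatv v ω j = ∑ k, tensorS p v i j k * hatv v ω k) ∧
      (∀ S : Fin (N + 1) → Fin (N + 1) → Fin (N + 1) → ℂ,
        (∀ i j ω, hatv v ω i * hatv v ω j = ∑ k, S i j k * hatv v ω k) →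
          S = tensorS p v) :=
  obtuse_tensor_exists_unique_general N v p hp1 hc hn
end

section
/- Let X be an obtuse random variable in C^N with associated 3-tensor S^{ij}_k = E[X^i X^j conj(X^k)] (indices 0,...,N, with X^0 = 1). Then conj(X^i) X^j = ∑_{k=0}^N conj(S^{ik}_j) X^k almost surely for all i, j. -/
open scoped BigOperators InnerProductSpace ComplexConjugate

/-- **The conjugate product relation.**
For an obtuse random variable `X` in `ℂ^N` with 3-tensor `S`, one has
`conj(X^i) X^j = ∑ k, conj(S^{ik}_j) X^k` almost surely. -/
theorem obtuse_tensor_conj_relation (N : ℕ)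
    (v : Fin (N + 1) → EuclideanSpace ℂ (Fin N)) (hv : Function.Injective v)
    (p : Fin (N + 1) → ℝ) (hp : ∀ i, 0 < p i) (hp1 : ∑ i, p i = 1)
    (hc : ∀ k, ∑ i, (p i : ℂ) * v i k = 0)
    (hn : ∀ k l, ∑ i, (p i : ℂ) * ((starRingEnd ℂ) (v i k) * v i l)
        = if k = l then 1 else 0) :
    ∀ i j ω, (starRingEnd ℂ) (hatv v ω i) * hatv v ω j
      = ∑ k, (starRingEnd ℂ) (tensorS p v i k j) * hatv v ω k := by
  have hp0 : ∀ ω, (p ω : ℂ) ≠ 0 := fun ω => by exact_mod_cast (hp ω).ne'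
  -- column orthonormality
  have hcol : ∀ a b : Fin (N+1),
      ∑ ω, (p ω : ℂ) * ((starRingEnd ℂ) (hatv v ω a) * hatv v ω b)
        = if a = b then 1 else 0 := by
    intro a b
    induction a using Fin.cases with
    | zero =>
      induction b using Fin.cases with
      | zero =>
        simp only [hatv, Fin.cons_zero, map_one, one_mul, mul_one, if_pos rfl]
        rw [if_pos trivial, ← Complex.ofReal_sum, hp1, Complex.ofReal_one]
      | succ l =>
        simp only [hatv, Fin.cons_zero, Fin.cons_succ, map_one, one_mul]
        rw [if_neg (Fin.succ_ne_zero l).symm]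
        exact hc l
    | succ k =>
      induction b using Fin.cases with
      | zero =>
        have h := congrArg (starRingEnd ℂ) (hc k)
        simp only [map_sum, map_mul, Complex.conj_ofReal, map_zero] at h
        simp only [hatv, Fin.cons_zero, Fin.cons_succ, mul_one]
        rw [if_neg (Fin.succ_ne_zero k)]
        exact h
      | succ l =>
        simp only [hatv, Fin.cons_succ, Fin.succ_inj]
        exact hn k l
  -- the unitary matrix
  set M : Matrix (Fin (N+1)) (Fin (N+1)) ℂ :=
    Matrix.of (fun ω a => ((Real.sqrt (p ω) : ℝ) : ℂ) * hatv v ω a) with hM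
  have hMhM : M.conjTranspose * M = 1 := by
    ext a b
    simp only [Matrix.mul_apply, Matrix.conjTranspose_apply, hM, Matrix.of_apply,
      map_mul, Complex.conj_ofReal, Matrix.one_apply]
    rw [← hcol a b]
    refine Finset.sum_congr rfl fun ω _ => ?_
    have hpp : ((Real.sqrt (p ω) : ℝ) : ℂ) * ((Real.sqrt (p ω) : ℝ) : ℂ) = (p ω : ℂ) := by
      rw [← Complex.ofReal_mul, Real.mul_self_sqrt (hp ω).le]
    simp only [star_mul', Complex.star_def, Complex.conj_ofReal]
    linear_combination ((starRingEnd ℂ) (hatv v ω a) * hatv v ω b) * hpp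
  have hMM : M * M.conjTranspose = 1 := mul_eq_one_comm.mp hMhM
  -- row orthogonality
  have hrow : ∀ ω ω' : Fin (N+1),
      ∑ a, hatv v ω a * (starRingEnd ℂ) (hatv v ω' a)
        = if ω = ω' then (p ω : ℂ)⁻¹ else 0 := by
    intro ω ω'
    have h := congrFun (congrFun hMM ω) ω'
    simp only [Matrix.mul_apply, Matrix.conjTranspose_apply, hM, Matrix.of_apply,
      map_mul, Complex.conj_ofReal, Matrix.one_apply, star_mul', Complex.star_def] at h
    have h2 : ((Real.sqrt (p ω) : ℝ) : ℂ) * ((Real.sqrt (p ω') : ℝ) : ℂ) *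
        ∑ a, hatv v ω a * (starRingEnd ℂ) (hatv v ω' a)
        = if ω = ω' then 1 else 0 := by
      rw [Finset.mul_sum, ← h]
      exact Finset.sum_congr rfl fun a _ => by ring
    have hs : ∀ ρ : Fin (N+1), ((Real.sqrt (p ρ) : ℝ) : ℂ) ≠ 0 := by
      intro ρ
      simp only [ne_eq, Complex.ofReal_eq_zero]
      exact (Real.sqrt_pos.mpr (hp ρ)).ne'
    by_cases hωω : ω = ω'
    · subst hωω
      rw [if_pos rfl] at h2 ⊢
      rw [← Complex.ofReal_mul, Real.mul_self_sqrt (hp ω).le] at h2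
      field_simp [hp0 ω]
      linear_combination h2
    · rw [if_neg hωω] at h2 ⊢
      rcases mul_eq_zero.mp h2 with h3 | h3
      · exact absurd h3 (mul_ne_zero (hs ω) (hs ω'))
      · exact h3
  -- final computation
  intro i j ω
  have expand : ∀ k, (starRingEnd ℂ) (tensorS p v i k j)
      = ∑ ω', (p ω' : ℂ) * ((starRingEnd ℂ) (hatv v ω' i) *
          (starRingEnd ℂ) (hatv v ω' k) * hatv v ω' j) := by
    intro k
    simp only [tensorS, map_sum, map_mul, Complex.conj_ofReal,
      Complex.conj_conj]
  symm
  calc ∑ k, (starRingEnd ℂ) (tensorS p v i k j) * hatv v ω k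
      = ∑ k, ∑ ω', (p ω' : ℂ) * ((starRingEnd ℂ) (hatv v ω' i) * hatv v ω' j) *
          (hatv v ω k * (starRingEnd ℂ) (hatv v ω' k)) := by
        refine Finset.sum_congr rfl fun k _ => ?_
        rw [expand k, Finset.sum_mul]
        exact Finset.sum_congr rfl fun ω' _ => by ring
    _ = ∑ ω', (p ω' : ℂ) * ((starRingEnd ℂ) (hatv v ω' i) * hatv v ω' j) *
          ∑ k, hatv v ω k * (starRingEnd ℂ) (hatv v ω' k) := by
        rw [Finset.sum_comm]
        exact Finset.sum_congr rfl fun ω' _ => (Finset.mul_sum _ _ _).symm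
    _ = ∑ ω', (p ω' : ℂ) * ((starRingEnd ℂ) (hatv v ω' i) * hatv v ω' j) *
          (if ω = ω' then (p ω : ℂ)⁻¹ else 0) := by
        exact Finset.sum_congr rfl fun ω' _ => by rw [hrow ω ω']
    _ = (starRingEnd ℂ) (hatv v ω i) * hatv v ω j := by
        rw [Finset.sum_eq_single ω]
        · rw [if_pos rfl, mul_comm ((p ω : ℂ)) _, mul_assoc,
            mul_inv_cancel₀ (hp0 ω), mul_one]
        · intro b _ hb
          rw [if_neg (Ne.symm hb), mul_zero]
        · intro h; exact absurd (Finset.mem_univ ω) h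
end

section
/- Let S be the 3-tensor of an obtuse random variable X in C^N, i.e. S^{ij}_k = E[X^i X^j conj(X^k)] for i,j,k = 0,...,N with X^0 = 1. Then: (a) S^{i0}_k = δ_{ik}; (b) S^{ij}_k is symmetric in (i,j); (c) ∑_m S^{im}_j S^{kl}_m is symmetric in (i,k); (d) ∑_m S^{im}_j conj(S^{lm}_k) is symmetric in (i,k). -/
open scoped BigOperators InnerProductSpace ComplexConjugate

open scoped Matrix

/-! Write `X^m(ω)` for `hatv v ω m`. Orthonormality of `X^0, …, X^N` in `L²(p)` says `B A = 1` for
the matrices `A_{ωm} = X^m(ω)` and `B_{mω} = p_ω conj X^m(ω)`. Both are square, so also `A B = 1`: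
this completeness relation gives `∑_m E[f X^m] E[conj X^m g] = E[f g]` for all `f, g`. It turns
the sums in (c) and (d) into the fourth moments `E[X^i conj X^j X^k X^l]` and
`E[X^i conj X^j conj X^l X^k]`, which are visibly symmetric in `(i, k)`. -/

theorem sum_mul_sum_eq_sum_of_biorthogonal {Ω ι R : Type*} [Fintype Ω] [Fintype ι]
    [DecidableEq Ω] [DecidableEq ι] [CommRing R] (e : Ω ≃ ι) {X Y : Ω → ι → R}
    (hXY : ∀ k i, ∑ ω, Y ω k * X ω i = if k = i then 1 else 0) (f g : Ω → R) :
    ∑ m, (∑ ω, f ω * X ω m) * (∑ ω, Y ω m * g ω) = ∑ ω, f ω * g ω := by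
  let A : Matrix Ω ι R := Matrix.of X
  let B : Matrix ι Ω R := Matrix.of fun m ω => Y ω m
  have hBA : B * A = 1 := by
    ext k i
    simp [A, B, Matrix.mul_apply, Matrix.one_apply, hXY]
  have hAB : A * B = 1 := (Matrix.mul_eq_one_comm_of_equiv e).mpr hBA
  calc ∑ m, (∑ ω, f ω * X ω m) * (∑ ω, Y ω m * g ω) = (f ᵥ* A) ⬝ᵥ (B *ᵥ g) := rfl
    _ = f ⬝ᵥ ((A * B) *ᵥ g) := by rw [← Matrix.mulVec_mulVec, Matrix.dotProduct_mulVec f A]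
    _ = ∑ ω, f ω * g ω := by rw [hAB, Matrix.one_mulVec]; rfl

section Obtuse

variable {N : ℕ} (p : Fin (N + 1) → ℝ) (v : Fin (N + 1) → EuclideanSpace ℂ (Fin N))

theorem sum_mul_hatv_mul_conj_hatv (hp1 : ∑ i, p i = 1)
    (hc : ∀ k, ∑ i, (p i : ℂ) * v i k = 0)
    (hn : ∀ k l, ∑ i, (p i : ℂ) * (conj (v i k) * v i l) = if k = l then 1 else 0)
    (i k : Fin (N + 1)) :
    ∑ ω, (p ω : ℂ) * (hatv v ω i * conj (hatv v ω k)) = if i = k then 1 else 0 := by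
  refine Fin.cases ?_ (fun i => ?_) i <;> refine Fin.cases ?_ (fun k => ?_) k
  · simpa [hatv] using congrArg Complex.ofReal hp1
  · simpa [hatv, (Fin.succ_ne_zero _).symm] using congrArg conj (hc k)
  · simpa [hatv, Fin.succ_ne_zero] using hc i
  · simpa [hatv, mul_comm, eq_comm] using hn k i

theorem sum_mul_hatv_mul_sum_conj_hatv_mul
    (horth : ∀ i k, ∑ ω, (p ω : ℂ) * (hatv v ω i * conj (hatv v ω k)) = if i = k then 1 else 0)
    (f g : Fin (N + 1) → ℂ) :
    ∑ m, (∑ ω, f ω * hatv v ω m) * (∑ ω, (p ω : ℂ) * conj (hatv v ω m) * g ω)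
      = ∑ ω, f ω * g ω :=
  sum_mul_sum_eq_sum_of_biorthogonal (Equiv.refl _)
    (fun k i => by simpa only [mul_assoc, mul_comm (conj _), eq_comm] using horth i k) f g

theorem sum_tensorS_mul_tensorS
    (horth : ∀ i k, ∑ ω, (p ω : ℂ) * (hatv v ω i * conj (hatv v ω k)) = if i = k then 1 else 0)
    (i j k l : Fin (N + 1)) :
    ∑ m, tensorS p v i m j * tensorS p v k l m
      = ∑ ω, (p ω : ℂ) * (hatv v ω i * conj (hatv v ω j)) * (hatv v ω k * hatv v ω l) := by
  refine .trans ?_ (sum_mul_hatv_mul_sum_conj_hatv_mul p v horth _ _)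
  refine Finset.sum_congr rfl fun m _ => ?_
  unfold tensorS
  congr 1 <;> exact Finset.sum_congr rfl fun ω _ => by ring

theorem sum_tensorS_mul_conj_tensorS
    (horth : ∀ i k, ∑ ω, (p ω : ℂ) * (hatv v ω i * conj (hatv v ω k)) = if i = k then 1 else 0)
    (i j k l : Fin (N + 1)) :
    ∑ m, tensorS p v i m j * conj (tensorS p v l m k)
      = ∑ ω, (p ω : ℂ) * (hatv v ω i * conj (hatv v ω j)) * (conj (hatv v ω l) * hatv v ω k) := by
  refine .trans ?_ (sum_mul_hatv_mul_sum_conj_hatv_mul p v horth _ _)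
  refine Finset.sum_congr rfl fun m _ => ?_
  simp only [tensorS, map_sum, map_mul, Complex.conj_ofReal, Complex.conj_conj]
  congr 1 <;> exact Finset.sum_congr rfl fun ω _ => by ring

end Obtuse

theorem obtuse_tensor_symmetries_general (N : ℕ)
    (v : Fin (N + 1) → EuclideanSpace ℂ (Fin N))
    (p : Fin (N + 1) → ℝ) (hp1 : ∑ i, p i = 1)
    (hc : ∀ k, ∑ i, (p i : ℂ) * v i k = 0)
    (hn : ∀ k l, ∑ i, (p i : ℂ) * ((starRingEnd ℂ) (v i k) * v i l)
        = if k = l then 1 else 0) :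
    (∀ i k, tensorS p v i 0 k = if i = k then 1 else 0) ∧
    (∀ i j k, tensorS p v i j k = tensorS p v j i k) ∧
    (∀ i j k l, ∑ m, tensorS p v i m j * tensorS p v k l m
        = ∑ m, tensorS p v k m j * tensorS p v i l m) ∧
    (∀ i j k l, ∑ m, tensorS p v i m j * (starRingEnd ℂ) (tensorS p v l m k)
        = ∑ m, tensorS p v k m j * (starRingEnd ℂ) (tensorS p v l m i)) := by
  have horth := sum_mul_hatv_mul_conj_hatv p v hp1 hc hn
  refine ⟨fun i k => ?_, fun i j k => ?_, fun i j k l => ?_, fun i j k l => ?_⟩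
  · simpa [tensorS, hatv] using horth i k
  · exact Finset.sum_congr rfl fun ω _ => by ring
  · rw [sum_tensorS_mul_tensorS p v horth, sum_tensorS_mul_tensorS p v horth]
    exact Finset.sum_congr rfl fun ω _ => by ring
  · rw [sum_tensorS_mul_conj_tensorS p v horth, sum_tensorS_mul_conj_tensorS p v horth]
    exact Finset.sum_congr rfl fun ω _ => by ring

/-- **Symmetries of the 3-tensor of an obtuse random variable.**
(a) `S^{i0}_k = δ_{ik}`; (b) `S^{ij}_k` is symmetric in `(i,j)`;
(c) `∑_m S^{im}_j S^{kl}_m` is symmetric in `(i,k)`;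
(d) `∑_m S^{im}_j conj(S^{lm}_k)` is symmetric in `(i,k)`. -/
theorem obtuse_tensor_symmetries (N : ℕ)
    (v : Fin (N + 1) → EuclideanSpace ℂ (Fin N)) (hv : Function.Injective v)
    (p : Fin (N + 1) → ℝ) (hp : ∀ i, 0 < p i) (hp1 : ∑ i, p i = 1)
    (hc : ∀ k, ∑ i, (p i : ℂ) * v i k = 0)
    (hn : ∀ k l, ∑ i, (p i : ℂ) * ((starRingEnd ℂ) (v i k) * v i l)
        = if k = l then 1 else 0) :
    (∀ i k, tensorS p v i 0 k = if i = k then 1 else 0) ∧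
    (∀ i j k, tensorS p v i j k = tensorS p v j i k) ∧
    (∀ i j k l, ∑ m, tensorS p v i m j * tensorS p v k l m
        = ∑ m, tensorS p v k m j * tensorS p v i l m) ∧
    (∀ i j k l, ∑ m, tensorS p v i m j * (starRingEnd ℂ) (tensorS p v l m k)
        = ∑ m, tensorS p v k m j * (starRingEnd ℂ) (tensorS p v l m i)) :=
  obtuse_tensor_symmetries_general N v p hp1 hc hn
end

section
/- Let V = {v_1, ..., v_K} be an orthogonal family of nonzero vectors in C^{N+1} and define the 3-tensor S^{ij}_k = ∑_{m=1}^K (1/‖v_m‖²) v_m^i v_m^j conj(v_m^k). Then S is doubly-symmetric: S^{ij}_k is symmetric in (i,j), ∑_m S^{im}_j S^{kl}_m is symmetric in (i,k), and ∑_m S^{im}_j conj(S^{lm}_k) is symmetric in (i,k). -/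
open scoped BigOperators InnerProductSpace ComplexConjugate

/-! Expanding both factors of a contraction `∑ m, S i m j * S k l m` (or its conjugate variant)
over the family turns the sum over `m` into the inner products `⟪v b, v a⟫`. Orthogonality kills
the cross terms `a ≠ b`, and what is left is a single sum over `a` whose summand contains
`i` and `k` only through the factor `v a i * v a k`, hence is symmetric in `i` and `k`. -/

namespace EuclideanSpace

variable {𝕜 ι κ : Type*} [RCLike 𝕜] [Fintype ι] [Fintype κ]

theorem sum_mul_conj_eq_inner (x y : EuclideanSpace 𝕜 ι) :
    ∑ m, x m * conj (y m) = ⟪y, x⟫_𝕜 := by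
  simp only [PiLp.inner_apply, RCLike.inner_apply]

theorem sum_mul_sum_conj_of_orthogonal {v : κ → EuclideanSpace 𝕜 ι}
    (horth : ∀ a b, a ≠ b → ⟪v a, v b⟫_𝕜 = 0) (x y : κ → 𝕜) :
    ∑ m, (∑ a, x a * v a m) * ∑ b, y b * conj (v b m)
      = ∑ a, x a * y a * (‖v a‖ ^ 2 : 𝕜) := by
  calc ∑ m, (∑ a, x a * v a m) * ∑ b, y b * conj (v b m)
      = ∑ a, ∑ b, x a * y b * ⟪v b, v a⟫_𝕜 := by
        simp_rw [Finset.sum_mul_sum, ← sum_mul_conj_eq_inner, Finset.mul_sum]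
        rw [Finset.sum_comm]
        refine Finset.sum_congr rfl fun a _ => ?_
        rw [Finset.sum_comm]
        exact Finset.sum_congr rfl fun b _ => Finset.sum_congr rfl fun m _ => by ring
    _ = ∑ a, x a * y a * ⟪v a, v a⟫_𝕜 := by
        refine Finset.sum_congr rfl fun a _ => Finset.sum_eq_single a (fun b _ hba => ?_) (by simp)
        rw [horth b a hba, mul_zero]
    _ = ∑ a, x a * y a * (‖v a‖ ^ 2 : 𝕜) := by simp only [inner_self_eq_norm_sq_to_K]

end EuclideanSpace

section TripleTensor

open EuclideanSpace

variable {𝕜 ι κ : Type*} [RCLike 𝕜] [Fintype κ]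

def tripleTensor (c : κ → 𝕜) (v : κ → EuclideanSpace 𝕜 ι) (i j k : ι) : 𝕜 :=
  ∑ a, c a * (v a i * v a j * conj (v a k))

variable (c : κ → 𝕜)

theorem tripleTensor_comm (v : κ → EuclideanSpace 𝕜 ι) (i j k : ι) :
    tripleTensor c v i j k = tripleTensor c v j i k :=
  Finset.sum_congr rfl fun _ _ => by ring

variable [Fintype ι] {v : κ → EuclideanSpace 𝕜 ι}

theorem sum_tripleTensor_mul_tripleTensor (horth : ∀ a b, a ≠ b → ⟪v a, v b⟫_𝕜 = 0)
    (i j k l : ι) :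
    ∑ m, tripleTensor c v i m j * tripleTensor c v k l m
      = ∑ a, c a ^ 2 * (‖v a‖ ^ 2 : 𝕜) * (v a i * conj (v a j) * (v a k * v a l)) := by
  have hleft : ∀ m, tripleTensor c v i m j = ∑ a, c a * v a i * conj (v a j) * v a m :=
    fun m => Finset.sum_congr rfl fun a _ => by ring
  have hright : ∀ m, tripleTensor c v k l m = ∑ b, c b * v b k * v b l * conj (v b m) :=
    fun m => Finset.sum_congr rfl fun b _ => by ring
  simp only [hleft, hright, sum_mul_sum_conj_of_orthogonal horth]
  exact Finset.sum_congr rfl fun a _ => by ring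

theorem sum_tripleTensor_mul_conj_tripleTensor (horth : ∀ a b, a ≠ b → ⟪v a, v b⟫_𝕜 = 0)
    (i j k l : ι) :
    ∑ m, tripleTensor c v i m j * conj (tripleTensor c v l m k)
      = ∑ a, c a * conj (c a) * (‖v a‖ ^ 2 : 𝕜)
          * (v a i * conj (v a j) * (conj (v a l) * v a k)) := by
  have hleft : ∀ m, tripleTensor c v i m j = ∑ a, c a * v a i * conj (v a j) * v a m :=
    fun m => Finset.sum_congr rfl fun a _ => by ring
  have hright : ∀ m, conj (tripleTensor c v l m k)
      = ∑ b, conj (c b) * conj (v b l) * v b k * conj (v b m) := by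
    intro m
    simp only [tripleTensor, map_sum, map_mul, RCLike.conj_conj]
    exact Finset.sum_congr rfl fun b _ => by ring
  simp only [hleft, hright, sum_mul_sum_conj_of_orthogonal horth]
  exact Finset.sum_congr rfl fun a _ => by ring

theorem sum_tripleTensor_mul_tripleTensor_comm (horth : ∀ a b, a ≠ b → ⟪v a, v b⟫_𝕜 = 0)
    (i j k l : ι) :
    ∑ m, tripleTensor c v i m j * tripleTensor c v k l m
      = ∑ m, tripleTensor c v k m j * tripleTensor c v i l m := by
  simp only [sum_tripleTensor_mul_tripleTensor c horth]
  exact Finset.sum_congr rfl fun a _ => by ring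

theorem sum_tripleTensor_mul_conj_tripleTensor_comm
    (horth : ∀ a b, a ≠ b → ⟪v a, v b⟫_𝕜 = 0) (i j k l : ι) :
    ∑ m, tripleTensor c v i m j * conj (tripleTensor c v l m k)
      = ∑ m, tripleTensor c v k m j * conj (tripleTensor c v l m i) := by
  simp only [sum_tripleTensor_mul_conj_tripleTensor c horth]
  exact Finset.sum_congr rfl fun a _ => by ring

end TripleTensor

theorem orthogonal_family_tensor_doubly_symmetric_general (N K : ℕ)
    (v : Fin K → EuclideanSpace ℂ (Fin (N + 1)))
    (horth : ∀ m n, m ≠ n → ⟪v m, v n⟫_ℂ = 0)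
    (S : Fin (N + 1) → Fin (N + 1) → Fin (N + 1) → ℂ)
    (hS : ∀ i j k, S i j k
      = ∑ m, (1 / (‖v m‖ ^ 2 : ℂ)) * (v m i * v m j * (starRingEnd ℂ) (v m k))) :
    (∀ i j k, S i j k = S j i k) ∧
    (∀ i j k l, ∑ m, S i m j * S k l m = ∑ m, S k m j * S i l m) ∧
    (∀ i j k l, ∑ m, S i m j * (starRingEnd ℂ) (S l m k)
        = ∑ m, S k m j * (starRingEnd ℂ) (S l m i)) := by
  obtain rfl : S = tripleTensor (fun m => 1 / (‖v m‖ ^ 2 : ℂ)) v := funext₃ hS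
  exact ⟨tripleTensor_comm _ v, sum_tripleTensor_mul_tripleTensor_comm _ horth,
    sum_tripleTensor_mul_conj_tripleTensor_comm _ horth⟩

/-- **Orthogonal families give doubly-symmetric 3-tensors.**
If `v 1, …, v K` is an orthogonal family of nonzero vectors in `ℂ^{N+1}` and
`S^{ij}_k = ∑_m (1/‖v m‖²) v_m^i v_m^j conj(v_m^k)`, then `S` satisfies the three
double-symmetry conditions. -/
theorem orthogonal_family_tensor_doubly_symmetric (N K : ℕ)
    (v : Fin K → EuclideanSpace ℂ (Fin (N + 1)))
    (horth : ∀ m n, m ≠ n → ⟪v m, v n⟫_ℂ = 0)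
    (hne : ∀ m, v m ≠ 0)
    (S : Fin (N + 1) → Fin (N + 1) → Fin (N + 1) → ℂ)
    (hS : ∀ i j k, S i j k
      = ∑ m, (1 / (‖v m‖ ^ 2 : ℂ)) * (v m i * v m j * (starRingEnd ℂ) (v m k))) :
    (∀ i j k, S i j k = S j i k) ∧
    (∀ i j k l, ∑ m, S i m j * S k l m = ∑ m, S k m j * S i l m) ∧
    (∀ i j k l, ∑ m, S i m j * (starRingEnd ℂ) (S l m k)
        = ∑ m, S k m j * (starRingEnd ℂ) (S l m i)) :=
  orthogonal_family_tensor_doubly_symmetric_general N K v horth S hS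
end

section
/- Let V be an orthogonal family of nonzero vectors in C^{N+1} and S the 3-tensor S(x) = ∑_{v ∈ V} (1/‖v‖²) ⟨v, x⟩ v ⊗ v. Then V coincides exactly with the set {w ∈ C^{N+1} \ {0} : S(w) = w ⊗ w}. -/
open scoped BigOperators InnerProductSpace ComplexConjugate

/-!
Contracting the first slot of `S(x)` with `conj (v n)` kills every term but the `n`-th, by
orthogonality, and leaves `⟪v n, x⟫ • v n`; contracting `w ⊗ w` in the same way gives
`⟪v n, w⟫ • w`. So a solution `w` of `S(w) = w ⊗ w` equals `v n` as soon as `⟪v n, w⟫ ≠ 0`.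
If instead `w` is orthogonal to every `v n`, then `S(w) = 0`, so `w i ^ 2 = 0` for all `i`
and `w = 0`.
-/

namespace EuclideanSpace

variable {𝕜 ι κ : Type*} [RCLike 𝕜] [Fintype ι] [Fintype κ]

/-- The coefficients `S(x)ᵢⱼ` of the tensor `S` of the family `v`. -/
noncomputable def familyTensor (v : κ → EuclideanSpace 𝕜 ι) (x : EuclideanSpace 𝕜 ι) (i j : ι) :
    𝕜 :=
  ∑ m, (1 / ((‖v m‖ : 𝕜) ^ 2)) * ⟪v m, x⟫_𝕜 * (v m i * v m j)

theorem inner_eq_sum_conj_mul (x y : EuclideanSpace 𝕜 ι) :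
    ⟪x, y⟫_𝕜 = ∑ i, conj (x i) * y i :=
  Finset.sum_congr rfl fun _ _ => mul_comm _ _

theorem sum_conj_mul_mul_self (u w : EuclideanSpace 𝕜 ι) (j : ι) :
    ∑ i, conj (u i) * (w i * w j) = ⟪u, w⟫_𝕜 * w j := by
  simp only [inner_eq_sum_conj_mul, Finset.sum_mul, mul_assoc]

theorem one_div_norm_sq_mul_inner_self {x : EuclideanSpace 𝕜 ι} (hx : x ≠ 0) :
    1 / ((‖x‖ : 𝕜) ^ 2) * ⟪x, x⟫_𝕜 = 1 := by
  rw [inner_self_eq_norm_sq_to_K, one_div_mul_cancel]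
  exact pow_ne_zero 2 (RCLike.ofReal_ne_zero.2 (norm_ne_zero_iff.2 hx))

variable {v : κ → EuclideanSpace 𝕜 ι}

theorem familyTensor_apply_self (horth : Pairwise fun m n => ⟪v m, v n⟫_𝕜 = 0) {n : κ}
    (hn : v n ≠ 0) (i j : ι) : familyTensor v (v n) i j = v n i * v n j := by
  rw [familyTensor, Finset.sum_eq_single n (fun m _ hmn => by rw [horth hmn]; ring)
    (by simp), one_div_norm_sq_mul_inner_self hn, one_mul]

theorem sum_conj_mul_familyTensor (u x : EuclideanSpace 𝕜 ι) (j : ι) :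
    ∑ i, conj (u i) * familyTensor v x i j
      = ∑ m, (1 / ((‖v m‖ : 𝕜) ^ 2)) * ⟪v m, x⟫_𝕜 * (⟪u, v m⟫_𝕜 * v m j) := by
  simp only [familyTensor, Finset.mul_sum, inner_eq_sum_conj_mul u, Finset.sum_mul]
  rw [Finset.sum_comm]
  refine Finset.sum_congr rfl fun m _ => Finset.sum_congr rfl fun i _ => ?_
  ring

theorem sum_conj_mul_familyTensor_of_pairwise
    (horth : Pairwise fun m n => ⟪v m, v n⟫_𝕜 = 0) {n : κ} (hn : v n ≠ 0)
    (x : EuclideanSpace 𝕜 ι) (j : ι) :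
    ∑ i, conj (v n i) * familyTensor v x i j = ⟪v n, x⟫_𝕜 * v n j := by
  rw [sum_conj_mul_familyTensor, Finset.sum_eq_single n
    (fun m _ hmn => by rw [horth hmn.symm]; ring) (by simp)]
  linear_combination ⟪v n, x⟫_𝕜 * v n j * one_div_norm_sq_mul_inner_self hn

theorem eq_of_familyTensor_eq_mul_self (horth : Pairwise fun m n => ⟪v m, v n⟫_𝕜 = 0)
    {n : κ} (hn : v n ≠ 0) {w : EuclideanSpace 𝕜 ι}
    (hw : ∀ i j, familyTensor v w i j = w i * w j) (hvw : ⟪v n, w⟫_𝕜 ≠ 0) : w = v n := by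
  ext j
  refine mul_left_cancel₀ hvw ?_
  rw [← sum_conj_mul_mul_self, ← sum_conj_mul_familyTensor_of_pairwise horth hn]
  simp only [hw]

theorem eq_zero_of_familyTensor_eq_mul_self {w : EuclideanSpace 𝕜 ι}
    (hw : ∀ i j, familyTensor v w i j = w i * w j) (hvw : ∀ m, ⟪v m, w⟫_𝕜 = 0) : w = 0 := by
  ext i
  have hii := hw i i
  simp only [familyTensor, hvw, mul_zero, zero_mul, Finset.sum_const_zero] at hii
  exact mul_self_eq_zero.mp hii.symm

end EuclideanSpace

/-- **Recovering the orthogonal family from the 3-tensor.**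
If `V = {v 1, …, v K}` is an orthogonal family of nonzero vectors in `ℂ^{N+1}` and
`S(x) = ∑_{v ∈ V} (1/‖v‖²) ⟪v, x⟫ v ⊗ v`, then `V` is exactly the set of nonzero
vectors `w` with `S(w) = w ⊗ w`. -/
theorem orthogonal_family_eq_fixed_vectors (N K : ℕ)
    (v : Fin K → EuclideanSpace ℂ (Fin (N + 1)))
    (horth : ∀ m n, m ≠ n → ⟪v m, v n⟫_ℂ = 0)
    (hne : ∀ m, v m ≠ 0) :
    Set.range v
      = {w : EuclideanSpace ℂ (Fin (N + 1)) | w ≠ 0 ∧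
          ∀ i j, ∑ m, (1 / (‖v m‖ ^ 2 : ℂ)) * ⟪v m, w⟫_ℂ * (v m i * v m j)
            = w i * w j} := by
  ext w
  constructor
  · rintro ⟨n, rfl⟩
    exact ⟨hne n, EuclideanSpace.familyTensor_apply_self horth (hne n)⟩
  · rintro ⟨hw0, hw⟩
    obtain ⟨n, hvw⟩ : ∃ n, ⟪v n, w⟫_ℂ ≠ 0 := by
      by_contra! hvw
      exact hw0 (EuclideanSpace.eq_zero_of_familyTensor_eq_mul_self hw hvw)
    exact ⟨n, (EuclideanSpace.eq_of_familyTensor_eq_mul_self horth (hne n) hw hvw).symm⟩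
end

section
/- Let S be a doubly-symmetric 3-tensor on C^{N+1} (symmetric in (i,j); ∑_m S^{im}_j S^{kl}_m symmetric in (i,k); ∑_m S^{im}_j conj(S^{lm}_k) symmetric in (i,k)). Define matrices S_k = (S^{ij}_k)_{i,j}. Then for all indices i, j, k, l, the matrices satisfy conj(S_i) S_j conj(S_k) S_l = conj(S_k) S_l conj(S_i) S_j; in particular the family {conj(S_i) S_j : i, j} is commuting. -/
open scoped BigOperators ComplexConjugate


variable {N : ℕ}

noncomputable def PP (S : Fin (N+1) → Fin (N+1) → Fin (N+1) → ℂ) (i j k l a b : Fin (N+1)) : ℂ :=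
  ∑ q, (∑ p, (starRingEnd ℂ) (S a p i) * S p q j) * (∑ r, (starRingEnd ℂ) (S q r k) * S r b l)

section
variable {S : Fin (N+1) → Fin (N+1) → Fin (N+1) → ℂ}

lemma auxA (hsym : ∀ i j k, S i j k = S j i k)
    (hsym3 : ∀ i j k l, ∑ m, S i m j * (starRingEnd ℂ) (S l m k)
      = ∑ m, S k m j * (starRingEnd ℂ) (S l m i))
    (i j a q : Fin (N+1)) :
    ∑ p, conj (S a p i) * S p q j = ∑ p, conj (S j p i) * S p q a := by
  have h := congrArg (starRingEnd ℂ) (hsym3 a i j q)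
  simp only [map_sum, map_mul, Complex.conj_conj] at h
  calc ∑ p, conj (S a p i) * S p q j
      = ∑ p, conj (S a p i) * S q p j :=
        Finset.sum_congr rfl fun p _ => by rw [hsym p q j]
    _ = ∑ p, conj (S j p i) * S q p a := h
    _ = ∑ p, conj (S j p i) * S p q a :=
        Finset.sum_congr rfl fun p _ => by rw [hsym p q a]

lemma auxA' (hsym : ∀ i j k, S i j k = S j i k)
    (hsym3 : ∀ i j k l, ∑ m, S i m j * (starRingEnd ℂ) (S l m k)
      = ∑ m, S k m j * (starRingEnd ℂ) (S l m i))
    (i j a q : Fin (N+1)) :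
    ∑ p, conj (S a p i) * S p q j = ∑ p, conj (S a p q) * S p i j := by
  have h := hsym3 q j i a
  calc ∑ p, conj (S a p i) * S p q j
      = ∑ p, S q p j * conj (S a p i) :=
        Finset.sum_congr rfl fun p _ => by rw [hsym p q j]; ring
    _ = ∑ p, S i p j * conj (S a p q) := h
    _ = ∑ p, conj (S a p q) * S p i j :=
        Finset.sum_congr rfl fun p _ => by rw [hsym i p j]; ring

lemma auxB (hsym2 : ∀ i j k l, ∑ m, S i m j * S k l m = ∑ m, S k m j * S i l m)
    (i a q r : Fin (N+1)) :
    ∑ p, conj (S a p i) * conj (S q r p) = ∑ p, conj (S q p i) * conj (S a r p) := by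
  have h := congrArg (starRingEnd ℂ) (hsym2 a i q r)
  simpa only [map_sum, map_mul] using h

lemma auxC (hsym : ∀ i j k, S i j k = S j i k)
    (hsym3 : ∀ i j k l, ∑ m, S i m j * (starRingEnd ℂ) (S l m k)
      = ∑ m, S k m j * (starRingEnd ℂ) (S l m i))
    (p j k r : Fin (N+1)) :
    ∑ q, S p q j * conj (S q r k) = ∑ q, S k q j * conj (S q r p) := by
  have h := hsym3 p j k r
  calc ∑ q, S p q j * conj (S q r k)
      = ∑ q, S p q j * conj (S r q k) :=
        Finset.sum_congr rfl fun q _ => by rw [hsym q r k]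
    _ = ∑ q, S k q j * conj (S r q p) := h
    _ = ∑ q, S k q j * conj (S q r p) :=
        Finset.sum_congr rfl fun q _ => by rw [hsym q r p]

lemma aux_pull {n : ℕ} (c : ℂ) {X Y : Fin n → ℂ} (h : ∑ q, X q = ∑ q, Y q) :
    ∑ q, c * X q = ∑ q, c * Y q := by
  rw [← Finset.mul_sum, ← Finset.mul_sum, h]

lemma sum_swap23 {n : ℕ} (f : Fin n → Fin n → Fin n → ℂ) :
    ∑ a, ∑ b, ∑ c, f a b c = ∑ a, ∑ c, ∑ b, f a b c :=
  Finset.sum_congr rfl fun _ _ => Finset.sum_comm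

lemma sum_swap13 {n : ℕ} (f : Fin n → Fin n → Fin n → ℂ) :
    ∑ a, ∑ b, ∑ c, f a b c = ∑ c, ∑ b, ∑ a, f a b c := by
  rw [sum_swap23, Finset.sum_comm, sum_swap23]

end

section
variable {S : Fin (N+1) → Fin (N+1) → Fin (N+1) → ℂ}

lemma hstar (hsym : ∀ i j k, S i j k = S j i k)
    (hsym2 : ∀ i j k l, ∑ m, S i m j * S k l m = ∑ m, S k m j * S i l m)
    (hsym3 : ∀ i j k l, ∑ m, S i m j * (starRingEnd ℂ) (S l m k)
      = ∑ m, S k m j * (starRingEnd ℂ) (S l m i))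
    (i j k l a b : Fin (N+1)) :
    PP S i j k l a b = PP S i j k a l b := by
  unfold PP
  calc ∑ q, (∑ p, conj (S a p i) * S p q j) * (∑ r, conj (S q r k) * S r b l)
      = ∑ q, ∑ p, ∑ r, (conj (S a p i) * S p q j) * (conj (S q r k) * S r b l) := by
        simp only [Finset.sum_mul, Finset.mul_sum]
        exact sum_swap23 _
    _ = ∑ p, ∑ q, ∑ r, (conj (S a p i) * S p q j) * (conj (S q r k) * S r b l) :=
        Finset.sum_comm
    _ = ∑ p, ∑ r, ∑ q, (conj (S a p i) * S p q j) * (conj (S q r k) * S r b l) :=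
        sum_swap23 _
    _ = ∑ p, ∑ r, ∑ q, (conj (S a p i) * S r b l) * (S p q j * conj (S q r k)) :=
        Finset.sum_congr rfl fun p _ => Finset.sum_congr rfl fun r _ =>
          Finset.sum_congr rfl fun q _ => by ring
    _ = ∑ p, ∑ r, ∑ q, (conj (S a p i) * S r b l) * (S k q j * conj (S q r p)) :=
        Finset.sum_congr rfl fun p _ => Finset.sum_congr rfl fun r _ =>
          aux_pull _ (auxC hsym hsym3 p j k r)
    _ = ∑ q, ∑ r, ∑ p, (conj (S a p i) * S r b l) * (S k q j * conj (S q r p)) :=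
        sum_swap13 _
    _ = ∑ q, ∑ r, ∑ p, (S k q j * S r b l) * (conj (S a p i) * conj (S q r p)) :=
        Finset.sum_congr rfl fun q _ => Finset.sum_congr rfl fun r _ =>
          Finset.sum_congr rfl fun p _ => by ring
    _ = ∑ q, ∑ r, ∑ p, (S k q j * S r b l) * (conj (S q p i) * conj (S a r p)) :=
        Finset.sum_congr rfl fun q _ => Finset.sum_congr rfl fun r _ =>
          aux_pull _ (auxB hsym2 i a q r)
    _ = ∑ q, ∑ p, ∑ r, (S k q j * S r b l) * (conj (S q p i) * conj (S a r p)) :=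
        sum_swap23 _
    _ = ∑ q, ∑ p, ∑ r, (S k q j * conj (S q p i)) * (conj (S a r p) * S r b l) :=
        Finset.sum_congr rfl fun q _ => Finset.sum_congr rfl fun p _ =>
          Finset.sum_congr rfl fun r _ => by ring
    _ = ∑ q, ∑ p, ∑ r, (S k q j * conj (S q p i)) * (conj (S l r p) * S r b a) :=
        Finset.sum_congr rfl fun q _ => Finset.sum_congr rfl fun p _ =>
          aux_pull _ (auxA hsym hsym3 p l a b)
    _ = ∑ q, ∑ r, ∑ p, (S k q j * conj (S q p i)) * (conj (S l r p) * S r b a) :=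
        sum_swap23 _
    _ = ∑ q, ∑ r, ∑ p, (S k q j * S r b a) * (conj (S q p i) * conj (S l r p)) :=
        Finset.sum_congr rfl fun q _ => Finset.sum_congr rfl fun r _ =>
          Finset.sum_congr rfl fun p _ => by ring
    _ = ∑ q, ∑ r, ∑ p, (S k q j * S r b a) * (conj (S l p i) * conj (S q r p)) :=
        Finset.sum_congr rfl fun q _ => Finset.sum_congr rfl fun r _ =>
          aux_pull _ (auxB hsym2 i q l r)
    _ = ∑ p, ∑ r, ∑ q, (S k q j * S r b a) * (conj (S l p i) * conj (S q r p)) :=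
        sum_swap13 _
    _ = ∑ p, ∑ r, ∑ q, (conj (S l p i) * S r b a) * (S k q j * conj (S q r p)) :=
        Finset.sum_congr rfl fun p _ => Finset.sum_congr rfl fun r _ =>
          Finset.sum_congr rfl fun q _ => by ring
    _ = ∑ p, ∑ r, ∑ q, (conj (S l p i) * S r b a) * (S p q j * conj (S q r k)) :=
        Finset.sum_congr rfl fun p _ => Finset.sum_congr rfl fun r _ =>
          aux_pull _ (auxC hsym hsym3 k j p r)
    _ = ∑ p, ∑ r, ∑ q, (conj (S l p i) * S p q j) * (conj (S q r k) * S r b a) :=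
        Finset.sum_congr rfl fun p _ => Finset.sum_congr rfl fun r _ =>
          Finset.sum_congr rfl fun q _ => by ring
    _ = ∑ p, ∑ q, ∑ r, (conj (S l p i) * S p q j) * (conj (S q r k) * S r b a) :=
        sum_swap23 _
    _ = ∑ q, ∑ p, ∑ r, (conj (S l p i) * S p q j) * (conj (S q r k) * S r b a) :=
        Finset.sum_comm
    _ = ∑ q, (∑ p, conj (S l p i) * S p q j) * (∑ r, conj (S q r k) * S r b a) := by
        simp only [Finset.sum_mul, Finset.mul_sum]
        exact sum_swap23 _

end

section
variable {S : Fin (N+1) → Fin (N+1) → Fin (N+1) → ℂ}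

lemma hCconj (hsym : ∀ i j k, S i j k = S j i k) (i j k l a b : Fin (N+1)) :
    PP S i j k l a b = conj (PP S l k j i b a) := by
  unfold PP
  rw [map_sum]
  refine Finset.sum_congr rfl fun q _ => ?_
  rw [map_mul, map_sum, map_sum]
  simp only [map_mul, Complex.conj_conj]
  rw [mul_comm]
  congr 1
  · refine Finset.sum_congr rfl fun r _ => ?_
    rw [hsym q r k, hsym r b l]; ring
  · refine Finset.sum_congr rfl fun p _ => ?_
    rw [hsym a p i, hsym p q j]; ring

lemma t1 (hsym : ∀ i j k, S i j k = S j i k)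
    (hsym3 : ∀ i j k l, ∑ m, S i m j * (starRingEnd ℂ) (S l m k)
      = ∑ m, S k m j * (starRingEnd ℂ) (S l m i))
    (i j k l a b : Fin (N+1)) :
    PP S i j k l a b = PP S i a k l j b := by
  unfold PP
  exact Finset.sum_congr rfl fun q _ => by rw [auxA hsym hsym3 i j a q]

lemma t4 (hsym : ∀ i j k, S i j k = S j i k)
    (hsym3 : ∀ i j k l, ∑ m, S i m j * (starRingEnd ℂ) (S l m k)
      = ∑ m, S k m j * (starRingEnd ℂ) (S l m i))
    (i j k l a b : Fin (N+1)) :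
    PP S i j k l a b = PP S i j b l a k := by
  unfold PP
  exact Finset.sum_congr rfl fun q _ => by rw [auxA' hsym hsym3 k l q b]

lemma t3 (hsym : ∀ i j k, S i j k = S j i k)
    (hsym2 : ∀ i j k l, ∑ m, S i m j * S k l m = ∑ m, S k m j * S i l m)
    (hsym3 : ∀ i j k l, ∑ m, S i m j * (starRingEnd ℂ) (S l m k)
      = ∑ m, S k m j * (starRingEnd ℂ) (S l m i))
    (i j k l a b : Fin (N+1)) :
    PP S i j k l a b = PP S b j k l a i := by
  rw [hCconj hsym i j k l a b, hstar hsym hsym2 hsym3 l k j i b a,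
    ← hCconj hsym b j k l a i]

lemma PP_comm (hsym : ∀ i j k, S i j k = S j i k)
    (hsym2 : ∀ i j k l, ∑ m, S i m j * S k l m = ∑ m, S k m j * S i l m)
    (hsym3 : ∀ i j k l, ∑ m, S i m j * (starRingEnd ℂ) (S l m k)
      = ∑ m, S k m j * (starRingEnd ℂ) (S l m i))
    (i j k l a b : Fin (N+1)) :
    PP S i j k l a b = PP S k l i j a b := by
  calc PP S i j k l a b
      = PP S i j b l a k := t4 hsym hsym3 i j k l a b
    _ = PP S k j b l a i := t3 hsym hsym2 hsym3 i j b l a k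
    _ = PP S k j i l a b := t4 hsym hsym3 k j b l a i
    _ = PP S k a i l j b := t1 hsym hsym3 k j i l a b
    _ = PP S k a i j l b := hstar hsym hsym2 hsym3 k a i l j b
    _ = PP S k l i j a b := t1 hsym hsym3 k a i j l b

end

/-- **The commutation property of the matrices of a doubly-symmetric 3-tensor.**
Let `S` be a doubly-symmetric 3-tensor on `ℂ^{N+1}` and `S_k` the matrix
`(S^{ij}_k)_{i,j}`.  Then `conj(S_i) S_j conj(S_k) S_l = conj(S_k) S_l conj(S_i) S_j`
for all indices; in particular the family `{conj(S_i) S_j}` is commuting. -/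
theorem doubly_symmetric_tensor_matrices_commute (N : ℕ)
    (S : Fin (N + 1) → Fin (N + 1) → Fin (N + 1) → ℂ)
    (hsym : ∀ i j k, S i j k = S j i k)
    (hsym2 : ∀ i j k l, ∑ m, S i m j * S k l m = ∑ m, S k m j * S i l m)
    (hsym3 : ∀ i j k l, ∑ m, S i m j * (starRingEnd ℂ) (S l m k)
        = ∑ m, S k m j * (starRingEnd ℂ) (S l m i))
    (M : Fin (N + 1) → Matrix (Fin (N + 1)) (Fin (N + 1)) ℂ)
    (hM : ∀ k i j, M k i j = S i j k) :
    (∀ i j k l, ((M i).map (starRingEnd ℂ) * M j) * ((M k).map (starRingEnd ℂ) * M l)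
        = ((M k).map (starRingEnd ℂ) * M l) * ((M i).map (starRingEnd ℂ) * M j)) ∧
    ∀ i j k l, Commute ((M i).map (starRingEnd ℂ) * M j)
        ((M k).map (starRingEnd ℂ) * M l) := by
  suffices key : ∀ i j k l, ((M i).map (starRingEnd ℂ) * M j) * ((M k).map (starRingEnd ℂ) * M l)
      = ((M k).map (starRingEnd ℂ) * M l) * ((M i).map (starRingEnd ℂ) * M j) by
    exact ⟨key, fun i j k l => key i j k l⟩
  intro i j k l
  ext a b
  have h1 : ∀ i j k l (a b : Fin (N+1)),
      (((M i).map (starRingEnd ℂ) * M j) * ((M k).map (starRingEnd ℂ) * M l)) a b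
        = PP S i j k l a b := by
    intro i j k l a b
    simp only [Matrix.mul_apply, Matrix.map_apply, hM, PP]
  rw [h1 i j k l a b, h1 k l i j a b]
  exact PP_comm hsym hsym2 hsym3 i j k l a b
end

section
/- Let S be a doubly-symmetric 3-tensor on C^{N+1} that additionally satisfies S^{i0}_k = δ_{ik} for all i, k. Then in its diagonalization S(x) = ∑_{v ∈ V} (1/‖v‖²) ⟨v, x⟩ v ⊗ v over an orthogonal system V, the system V consists of exactly N+1 vectors, each of which has 0-th coordinate equal to 1; moreover the truncations of these vectors to coordinates 1,...,N form an obtuse system of C^N. -/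
open scoped BigOperators InnerProductSpace ComplexConjugate

/-!
Contracting the last index of `∑ₘ ‖vₘ‖⁻² vₘ ⊗ vₘ ⊗ v̄ₘ` against `vₙ` kills every term but the
`n`-th, by orthogonality, and leaves `vₙ ⊗ vₙ`. With `S^{i0}_k = δ_{ik}` this reads
`vₙ(0) vₙ = vₙ`, so `vₙ(0) = 1`. Taking the trace of `S^{i0}_k` instead gives
`N + 1 = ∑ₘ vₘ(0) = K`, and orthogonality of `vₘ, vₙ` with `vₘ(0) = vₙ(0) = 1` says that
their truncations have inner product `-1`.
-/

theorem EuclideanSpace.inner_eq_sum_conj_mul_s17 {𝕜 ι : Type*} [RCLike 𝕜] [Fintype ι]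
    (x y : EuclideanSpace 𝕜 ι) : ⟪x, y⟫_𝕜 = ∑ k, conj (x k) * y k := by
  simp only [PiLp.inner_apply, RCLike.inner_apply']

section DiagTensor

variable {𝕜 ι κ : Type*} [RCLike 𝕜] [Fintype ι] [Fintype κ] {v : κ → EuclideanSpace 𝕜 ι}

noncomputable def diagTensor (v : κ → EuclideanSpace 𝕜 ι) (i j k : ι) : 𝕜 :=
  ∑ m, (1 / (‖v m‖ ^ 2 : 𝕜)) * (v m i * v m j * conj (v m k))

theorem diagTensor_contract (horth : Pairwise fun m n => ⟪v m, v n⟫_𝕜 = 0)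
    (hne : ∀ m, v m ≠ 0) (i j : ι) (n : κ) :
    ∑ k, diagTensor v i j k * v n k = v n i * v n j := by
  calc ∑ k, diagTensor v i j k * v n k
      = ∑ m, (1 / (‖v m‖ ^ 2 : 𝕜)) * (v m i * v m j) * ⟪v m, v n⟫_𝕜 := by
        simp only [diagTensor, Finset.sum_mul, EuclideanSpace.inner_eq_sum_conj_mul_s17,
          Finset.mul_sum]
        rw [Finset.sum_comm]
        refine Finset.sum_congr rfl fun m _ => Finset.sum_congr rfl fun k _ => by ring
    _ = (1 / (‖v n‖ ^ 2 : 𝕜)) * (v n i * v n j) * ⟪v n, v n⟫_𝕜 :=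
        Finset.sum_eq_single n (fun m _ hm => by rw [horth hm, mul_zero]) (by simp)
    _ = v n i * v n j := by
        rw [inner_self_eq_norm_sq_to_K]
        field_simp [hne n]

theorem sum_diagTensor_diag (hne : ∀ m, v m ≠ 0) (j : ι) :
    ∑ i, diagTensor v i j i = ∑ m, v m j := by
  unfold diagTensor
  rw [Finset.sum_comm]
  refine Finset.sum_congr rfl fun m _ => ?_
  calc ∑ i, (1 / (‖v m‖ ^ 2 : 𝕜)) * (v m i * v m j * conj (v m i))
      = (1 / (‖v m‖ ^ 2 : 𝕜)) * v m j * ⟪v m, v m⟫_𝕜 := by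
        rw [EuclideanSpace.inner_eq_sum_conj_mul_s17, Finset.mul_sum]
        exact Finset.sum_congr rfl fun i _ => by ring
    _ = v m j := by
        rw [inner_self_eq_norm_sq_to_K]
        field_simp [hne m]

variable [DecidableEq ι] {j₀ : ι}

theorem coord_eq_one_of_diagTensor_eq_delta (horth : Pairwise fun m n => ⟪v m, v n⟫_𝕜 = 0)
    (hne : ∀ m, v m ≠ 0) (hδ : ∀ i k, diagTensor v i j₀ k = if i = k then 1 else 0) (n : κ) :
    v n j₀ = 1 := by
  obtain ⟨i, hi⟩ : ∃ i, v n i ≠ 0 := by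
    by_contra! h
    exact hne n (by ext i; simp [h i])
  have hcontract := diagTensor_contract horth hne i j₀ n
  simp only [hδ, ite_mul, one_mul, zero_mul, Finset.sum_ite_eq, Finset.mem_univ,
    if_true] at hcontract
  exact (mul_eq_left₀ hi).mp hcontract.symm

theorem card_eq_of_diagTensor_eq_delta (horth : Pairwise fun m n => ⟪v m, v n⟫_𝕜 = 0)
    (hne : ∀ m, v m ≠ 0) (hδ : ∀ i k, diagTensor v i j₀ k = if i = k then 1 else 0) :
    Fintype.card κ = Fintype.card ι := by
  have htrace := sum_diagTensor_diag hne j₀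
  simp [hδ, coord_eq_one_of_diagTensor_eq_delta horth hne hδ] at htrace
  exact_mod_cast htrace.symm

end DiagTensor

/-- **Diagonalization of the 3-tensor of an obtuse random variable.**
Let `S` be a (doubly-symmetric) 3-tensor on `ℂ^{N+1}` with `S^{i0}_k = δ_{ik}`, and
suppose `S` is diagonalized over an orthogonal family `v 1, …, v K` of nonzero
vectors.  Then `K = N + 1`, every `v m` has 0-th coordinate `1`, and the truncations
of the `v m` to coordinates `1, …, N` form an obtuse system of `ℂ^N`. -/
theorem tensor_with_delta_condition_gives_obtuse_system (N K : ℕ)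
    (S : Fin (N + 1) → Fin (N + 1) → Fin (N + 1) → ℂ)
    (hdelta : ∀ i k, S i 0 k = if i = k then 1 else 0)
    (v : Fin K → EuclideanSpace ℂ (Fin (N + 1)))
    (horth : ∀ m n, m ≠ n → ⟪v m, v n⟫_ℂ = 0)
    (hne : ∀ m, v m ≠ 0)
    (hrep : ∀ i j k, S i j k
      = ∑ m, (1 / (‖v m‖ ^ 2 : ℂ)) * (v m i * v m j * (starRingEnd ℂ) (v m k))) :
    K = N + 1 ∧ (∀ m, v m 0 = 1) ∧
      ∀ m n, m ≠ n → ∑ k : Fin N, (starRingEnd ℂ) (v m k.succ) * v n k.succ = -1 := by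
  obtain rfl : S = diagTensor v := funext fun i => funext fun j => funext fun k => hrep i j k
  have hpairwise : Pairwise fun m n => ⟪v m, v n⟫_ℂ = 0 := fun m n => horth m n
  have hv0 := coord_eq_one_of_diagTensor_eq_delta hpairwise hne hdelta
  refine ⟨by simpa using card_eq_of_diagTensor_eq_delta hpairwise hne hdelta, hv0,
    fun m n hmn => ?_⟩
  have h := horth m n hmn
  rw [EuclideanSpace.inner_eq_sum_conj_mul_s17, Fin.sum_univ_succ, hv0, hv0, map_one, one_mul] at h
  linear_combination h
end

section
/- Let X be an obtuse random variable in C^N with 3-tensor S^{ij}_k = E[X^i X^j conj(X^k)] (indices 0,...,N, X^0 = 1). Then X takes only real values almost surely if and only if S^{ij}_k = S^{kj}_i for all i, j, k. -/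
open scoped BigOperators InnerProductSpace ComplexConjugate

open Matrix

/-- **Characterization of real obtuse random variables.**
An obtuse random variable `X` in `ℂ^N` with 3-tensor `S` takes only real values
(almost surely) if and only if `S^{ij}_k = S^{kj}_i` for all `i, j, k`. -/
theorem obtuse_real_iff_tensor_commutes (N : ℕ)
    (v : Fin (N + 1) → EuclideanSpace ℂ (Fin N)) (hv : Function.Injective v)
    (p : Fin (N + 1) → ℝ) (hp : ∀ i, 0 < p i) (hp1 : ∑ i, p i = 1)
    (hc : ∀ k, ∑ i, (p i : ℂ) * v i k = 0)
    (hn : ∀ k l, ∑ i, (p i : ℂ) * ((starRingEnd ℂ) (v i k) * v i l)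
        = if k = l then 1 else 0) :
    (∀ ω k, (v ω k).im = 0) ↔ (∀ i j k, tensorS p v i j k = tensorS p v k j i) := by
  constructor
  · intro hreal i j k
    have hconj : ∀ ω m, (starRingEnd ℂ) (hatv v ω m) = hatv v ω m := by
      intro ω m
      refine Fin.cases ?_ ?_ m
      · simp [hatv]
      · intro m
        simp only [hatv, Fin.cons_succ]
        rw [Complex.conj_eq_iff_im]
        exact hreal ω m
    unfold tensorS
    refine Finset.sum_congr rfl fun ω _ => ?_
    rw [hconj ω k, hconj ω i]
    ring
  · intro h
    -- orthonormality of the extended family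
    have orth : ∀ i k : Fin (N+1),
        ∑ ω, (p ω : ℂ) * (hatv v ω i * (starRingEnd ℂ) (hatv v ω k))
          = if i = k then 1 else 0 := by
      intro i k
      induction i using Fin.cases with
      | zero =>
        induction k using Fin.cases with
        | zero =>
          rw [if_pos rfl]
          have hterm : ∀ ω, (p ω : ℂ) * (hatv v ω 0 * (starRingEnd ℂ) (hatv v ω 0))
              = (p ω : ℂ) := by intro ω; simp [hatv]
          rw [Finset.sum_congr rfl (fun ω _ => hterm ω)]
          exact_mod_cast hp1
        | succ l =>
          have hterm : ∀ ω, (p ω : ℂ) * (hatv v ω 0 * (starRingEnd ℂ) (hatv v ω l.succ))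
              = (starRingEnd ℂ) ((p ω : ℂ) * v ω l) := by
            intro ω
            simp [hatv, _root_.map_mul, Complex.conj_ofReal]
          rw [Finset.sum_congr rfl (fun ω _ => hterm ω), ← map_sum, hc l, map_zero]
          simp [(Fin.succ_ne_zero l).symm]
      | succ m =>
        induction k using Fin.cases with
        | zero =>
          have hterm : ∀ ω, (p ω : ℂ) * (hatv v ω m.succ * (starRingEnd ℂ) (hatv v ω 0))
              = (p ω : ℂ) * v ω m := by
            intro ω; simp [hatv]
          rw [Finset.sum_congr rfl (fun ω _ => hterm ω), hc m]
          simp [Fin.succ_ne_zero m]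
        | succ l =>
          have hterm : ∀ ω, (p ω : ℂ) * (hatv v ω m.succ * (starRingEnd ℂ) (hatv v ω l.succ))
              = (p ω : ℂ) * ((starRingEnd ℂ) (v ω l) * v ω m) := by
            intro ω; simp only [hatv, Fin.cons_succ]; ring
          rw [Finset.sum_congr rfl (fun ω _ => hterm ω), hn l m]
          simp [Fin.succ_inj, eq_comm]
    have hsq : ∀ ω, ((Real.sqrt (p ω) : ℂ)) * (Real.sqrt (p ω) : ℂ) = (p ω : ℂ) := by
      intro ω
      norm_cast
      exact Real.mul_self_sqrt (hp ω).le
    set A : Matrix (Fin (N+1)) (Fin (N+1)) ℂ :=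
      fun i ω => (Real.sqrt (p ω) : ℂ) * hatv v ω i with hA
    have hAA : A * Aᴴ = 1 := by
      ext i k
      rw [Matrix.mul_apply]
      have hterm : ∀ ω, A i ω * Aᴴ ω k
          = (p ω : ℂ) * (hatv v ω i * (starRingEnd ℂ) (hatv v ω k)) := by
        intro ω
        rw [Matrix.conjTranspose_apply, hA]
        simp only [Complex.star_def, _root_.map_mul, Complex.conj_ofReal]
        rw [← hsq ω]
        ring
      rw [Finset.sum_congr rfl (fun ω _ => hterm ω), orth i k]
      simp [Matrix.one_apply]
    have hAhA : Aᴴ * A = 1 := mul_eq_one_comm.mp hAA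
    intro ω₀ k₀
    set j : Fin (N+1) := k₀.succ with hj
    set g : Fin (N+1) → ℂ :=
      fun ω => (Real.sqrt (p ω) : ℂ) * ((starRingEnd ℂ) (hatv v ω j) - hatv v ω j) with hg
    have hAg : A.mulVec g = 0 := by
      ext i
      rw [Matrix.mulVec, dotProduct]
      have hterm : ∀ ω, A i ω * g ω
          = (p ω : ℂ) * (hatv v ω i * (starRingEnd ℂ) (hatv v ω j))
            - (p ω : ℂ) * (hatv v ω i * hatv v ω j * (starRingEnd ℂ) (hatv v ω 0)) := by
        intro ω
        rw [hA, hg]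
        simp only [hatv, Fin.cons_zero, _root_.map_one, mul_one]
        rw [← hsq ω]
        ring
      rw [Finset.sum_congr rfl (fun ω _ => hterm ω), Finset.sum_sub_distrib, orth i j]
      have h2 : ∑ ω, (p ω : ℂ) * (hatv v ω i * hatv v ω j * (starRingEnd ℂ) (hatv v ω 0))
          = if j = i then 1 else 0 := by
        have := h i j 0
        rw [tensorS, tensorS] at this
        rw [this]
        have hterm2 : ∀ ω, (p ω : ℂ) * (hatv v ω 0 * hatv v ω j * (starRingEnd ℂ) (hatv v ω i))
            = (p ω : ℂ) * (hatv v ω j * (starRingEnd ℂ) (hatv v ω i)) := by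
          intro ω; simp [hatv]
        rw [Finset.sum_congr rfl (fun ω' _ => hterm2 ω'), orth j i]
      rw [h2]
      by_cases hij : i = j <;> simp [hij, eq_comm, Pi.zero_apply]
    have hg0 : g = 0 := by
      have h1 : Aᴴ.mulVec (A.mulVec g) = g := by
        rw [Matrix.mulVec_mulVec, hAhA, Matrix.one_mulVec]
      rw [hAg, Matrix.mulVec_zero] at h1
      exact h1.symm
    have := congrFun hg0 ω₀
    rw [hg] at this
    simp only [Pi.zero_apply, mul_eq_zero, sub_eq_zero] at this
    rcases this with h0 | hconj
    · exfalso
      exact (Complex.ofReal_ne_zero.mpr (ne_of_gt (Real.sqrt_pos.mpr (hp ω₀)))) h0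
    · have : (starRingEnd ℂ) (v ω₀ k₀) = v ω₀ k₀ := by
        simpa [hatv, hj] using hconj
      exact (Complex.conj_eq_iff_im.mp this)
end

section
/- Let X be an obtuse random variable in C^N with 3-tensor S^{ij}_k = E[X^i X^j conj(X^k)]. Then the matrix S_0 = (S^{ij}_0)_{i,j=0,...,N} is symmetric and unitary; consequently there exists a unitary matrix V with S_0 = V Vᵀ, and for any such V the random variable R = V* X is a real obtuse random variable (i.e., takes values in R^N almost surely). -/
open scoped BigOperators InnerProductSpace ComplexConjugate
open Matrix

/-- `V` is a unitary of `ℂ^{N+1}` obtained from a unitary of `ℂ^N` extended by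
`V e₀ = e₀`. -/
def FixesE0 {N : ℕ} (V : Matrix (Fin (N + 1)) (Fin (N + 1)) ℂ) : Prop :=
  V 0 0 = 1 ∧ ∀ j, j ≠ 0 → V 0 j = 0 ∧ V j 0 = 0

/-! Put `W ω i = √p(ω) X^i(ω)`. Centering and normalization of `X` (together with `∑ p = 1`)
say exactly that `Wᴴ W = 1`, and `S₀ = Wᵀ W` because `X^0 = 1`; so `S₀` is symmetric and unitary.
The first column `√p` of `W` is a real unit vector; completing it to a real orthogonal matrix `O`
gives `V = Wᵀ O` with `V Vᵀ = Wᵀ W` and `V e₀ = e₀`. Finally `W Wᴴ = 1` gives `S₀ X̄ = X` at every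
sample point, so if `S₀ = V Vᵀ` with `V` unitary then `V* X = V* S₀ X̄ = Vᵀ X̄` is the conjugate
of `V* X`, hence real. -/

section UnitaryMatrix

variable {ι α : Type*} [Fintype ι] [DecidableEq ι] [CommRing α] [StarRing α]

lemma transpose_mul_self_mulVec_star_row {W : Matrix ι ι α} (hW : W ∈ unitaryGroup ι α)
    (ω : ι) : (Wᵀ * W) *ᵥ star (W ω) = W ω := by
  have hrow : star (W ω) = Wᴴ *ᵥ Pi.single ω 1 := by
    rw [mulVec_single_one]; rfl
  rw [hrow, mulVec_mulVec, Matrix.mul_assoc, ← star_eq_conjTranspose,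
    mem_unitaryGroup_iff.mp hW, Matrix.mul_one, mulVec_single_one]
  rfl

lemma star_conjTranspose_mulVec_eq_self {V : Matrix ι ι α} (hV : V ∈ unitaryGroup ι α)
    {x : ι → α} (hx : (V * Vᵀ) *ᵥ star x = x) : star (Vᴴ *ᵥ x) = Vᴴ *ᵥ x :=
  calc star (Vᴴ *ᵥ x) = Vᵀ *ᵥ star x := by
        rw [star_mulVec, conjTranspose_conjTranspose, mulVec_transpose]
    _ = Vᴴ *ᵥ ((V * Vᵀ) *ᵥ star x) := by
        rw [mulVec_mulVec, ← Matrix.mul_assoc, ← star_eq_conjTranspose,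
          mem_unitaryGroup_iff'.mp hV, Matrix.one_mul]
    _ = Vᴴ *ᵥ x := by rw [hx]

end UnitaryMatrix

lemma conjTranspose_map_ofReal {m n : Type*} (O : Matrix m n ℝ) :
    (O.map ((↑) : ℝ → ℂ))ᴴ = (O.map (↑))ᵀ := by
  ext; simp

section Orthogonal

variable {ι : Type*} [Fintype ι] [DecidableEq ι]

lemma exists_mem_orthogonalGroup_col_eq (u : ι → ℝ) (hu : ∑ i, u i ^ 2 = 1) (i₀ : ι) :
    ∃ O ∈ orthogonalGroup ι ℝ, ∀ ω, O ω i₀ = u ω := by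
  have hnorm : ‖WithLp.toLp 2 u‖ = 1 := by
    simp [EuclideanSpace.norm_eq, hu]
  have hon : Orthonormal ℝ (({i₀} : Set ι).domRestrict fun _ => WithLp.toLp 2 u) := by
    rw [orthonormal_iff_ite]
    rintro ⟨i, rfl⟩ ⟨j, rfl⟩
    simp [Set.domRestrict, hnorm]
  obtain ⟨b, hb⟩ := hon.exists_orthonormalBasis_extension_of_card_eq (by simp)
  refine ⟨(EuclideanSpace.basisFun ι ℝ).toBasis.toMatrix b,
    (EuclideanSpace.basisFun ι ℝ).toMatrix_orthonormalBasis_mem_unitary b, fun ω => ?_⟩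
  simp [Module.Basis.toMatrix_apply, hb i₀ rfl]

lemma map_ofReal_mul_transpose {O : Matrix ι ι ℝ} (hO : O ∈ orthogonalGroup ι ℝ) :
    O.map ((↑) : ℝ → ℂ) * (O.map (↑))ᵀ = 1 := by
  have h := congrArg (Matrix.map · Complex.ofRealHom) ((mem_orthogonalGroup_iff ι ℝ).mp hO)
  rw [Matrix.map_mul, transpose_map] at h
  exact h.trans (Matrix.map_one _ (map_zero _) (map_one _))

lemma map_ofReal_mem_unitaryGroup {O : Matrix ι ι ℝ} (hO : O ∈ orthogonalGroup ι ℝ) :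
    O.map ((↑) : ℝ → ℂ) ∈ unitaryGroup ι ℂ := by
  rw [mem_unitaryGroup_iff, star_eq_conjTranspose, conjTranspose_map_ofReal]
  exact map_ofReal_mul_transpose hO

lemma exists_mem_unitaryGroup_transpose_mul_self_eq {W : Matrix ι ι ℂ}
    (hW : W ∈ unitaryGroup ι ℂ) {i₀ : ι} {u : ι → ℝ} (hu : ∀ ω, W ω i₀ = u ω) :
    ∃ V ∈ unitaryGroup ι ℂ, (∀ j, V i₀ j = (1 : Matrix ι ι ℂ) i₀ j ∧
      V j i₀ = (1 : Matrix ι ι ℂ) i₀ j) ∧ Wᵀ * W = V * Vᵀ := by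
  have hWW : Wᴴ * W = 1 := mem_unitaryGroup_iff'.mp hW
  have hu1 : ∑ ω, u ω ^ 2 = 1 := by
    have h := congrFun (congrFun hWW i₀) i₀
    simp only [mul_apply, conjTranspose_apply, hu, one_apply_eq, Complex.star_def,
      Complex.conj_ofReal] at h
    have h' : ((∑ ω, u ω ^ 2 : ℝ) : ℂ) = 1 := by push_cast; simpa [sq] using h
    exact_mod_cast h'
  obtain ⟨O, hO, hOu⟩ := exists_mem_orthogonalGroup_col_eq u hu1 i₀
  set U := O.map ((↑) : ℝ → ℂ)
  have hUU : U * Uᵀ = 1 := map_ofReal_mul_transpose hO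
  have hUcol : ∀ ω, U ω i₀ = W ω i₀ := fun ω => by simp [U, hOu, hu]
  refine ⟨Wᵀ * U, mul_mem (transpose_mem_unitaryGroup_iff.mpr hW)
    (map_ofReal_mem_unitaryGroup hO), fun j => ⟨?_, ?_⟩, ?_⟩
  · calc (Wᵀ * U) i₀ j = (Uᵀ * U) i₀ j := by simp only [mul_apply, transpose_apply, hUcol]
      _ = (1 : Matrix ι ι ℂ) i₀ j := by rw [mul_eq_one_comm.mp hUU]
  · calc (Wᵀ * U) j i₀ = (Wᴴ * W) i₀ j := by
          simp only [mul_apply, transpose_apply, conjTranspose_apply, hUcol, hu,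
            Complex.star_def, Complex.conj_ofReal, mul_comm]
      _ = (1 : Matrix ι ι ℂ) i₀ j := by rw [hWW]
  · rw [transpose_mul, transpose_transpose, Matrix.mul_assoc, ← Matrix.mul_assoc U, hUU,
      Matrix.one_mul]

end Orthogonal

@[simp]
lemma hatv_zero {N : ℕ} (v : Fin (N + 1) → EuclideanSpace ℂ (Fin N)) (ω : Fin (N + 1)) :
    hatv v ω 0 = 1 := rfl

@[simp]
lemma hatv_succ {N : ℕ} (v : Fin (N + 1) → EuclideanSpace ℂ (Fin N)) (ω : Fin (N + 1))
    (k : Fin N) : hatv v ω k.succ = v ω k := rfl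

lemma fixesE0_of_row_col {N : ℕ} {V : Matrix (Fin (N + 1)) (Fin (N + 1)) ℂ}
    (h : ∀ j, V 0 j = (1 : Matrix (Fin (N + 1)) (Fin (N + 1)) ℂ) 0 j ∧
      V j 0 = (1 : Matrix (Fin (N + 1)) (Fin (N + 1)) ℂ) 0 j) : FixesE0 V :=
  ⟨by simpa using (h 0).1, fun j hj => by simpa [one_apply, Ne.symm hj] using h j⟩

lemma ofReal_sqrt_mul_self {x : ℝ} (hx : 0 ≤ x) : (Real.sqrt x : ℂ) * Real.sqrt x = x := by
  rw [← Complex.ofReal_mul, Real.mul_self_sqrt hx]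

section ObtuseMatrix

variable {N : ℕ} (p : Fin (N + 1) → ℝ) (v : Fin (N + 1) → EuclideanSpace ℂ (Fin N))

noncomputable def obtuseMatrix : Matrix (Fin (N + 1)) (Fin (N + 1)) ℂ :=
  Matrix.of fun ω i => (Real.sqrt (p ω) : ℂ) * hatv v ω i

lemma sum_mul_conj_hatv_mul_hatv (hp1 : ∑ i, p i = 1) (hc : ∀ k, ∑ i, (p i : ℂ) * v i k = 0)
    (hn : ∀ k l, ∑ i, (p i : ℂ) * ((starRingEnd ℂ) (v i k) * v i l) = if k = l then 1 else 0)
    (i j : Fin (N + 1)) :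
    ∑ ω, (p ω : ℂ) * ((starRingEnd ℂ) (hatv v ω i) * hatv v ω j)
      = (1 : Matrix (Fin (N + 1)) (Fin (N + 1)) ℂ) i j := by
  cases i using Fin.cases with
  | zero =>
    cases j using Fin.cases with
    | zero => simp [← Complex.ofReal_sum, hp1]
    | succ l => simpa [one_apply, (Fin.succ_ne_zero l).symm] using hc l
  | succ k =>
    cases j using Fin.cases with
    | zero => simpa [Complex.conj_ofReal] using congrArg (starRingEnd ℂ) (hc k)
    | succ l => simpa [one_apply] using hn k l

lemma obtuseMatrix_mem_unitaryGroup (hp : ∀ ω, 0 ≤ p ω) (hp1 : ∑ i, p i = 1)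
    (hc : ∀ k, ∑ i, (p i : ℂ) * v i k = 0)
    (hn : ∀ k l, ∑ i, (p i : ℂ) * ((starRingEnd ℂ) (v i k) * v i l) = if k = l then 1 else 0) :
    obtuseMatrix p v ∈ unitaryGroup (Fin (N + 1)) ℂ := by
  rw [mem_unitaryGroup_iff', star_eq_conjTranspose]
  ext i j
  rw [mul_apply, ← sum_mul_conj_hatv_mul_hatv p v hp1 hc hn]
  refine Finset.sum_congr rfl fun ω _ => ?_
  simp only [obtuseMatrix, conjTranspose_apply, of_apply, star_mul', Complex.star_def,
    Complex.conj_ofReal]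
  linear_combination (starRingEnd ℂ (hatv v ω i) * hatv v ω j) * ofReal_sqrt_mul_self (hp ω)

lemma transpose_obtuseMatrix_mul_self_apply (hp : ∀ ω, 0 ≤ p ω) (i j : Fin (N + 1)) :
    ((obtuseMatrix p v)ᵀ * obtuseMatrix p v) i j = tensorS p v i j 0 := by
  rw [mul_apply, tensorS]
  refine Finset.sum_congr rfl fun ω _ => ?_
  simp only [obtuseMatrix, transpose_apply, of_apply, hatv_zero, map_one, mul_one]
  linear_combination (hatv v ω i * hatv v ω j) * ofReal_sqrt_mul_self (hp ω)

lemma transpose_obtuseMatrix_mul_self_mulVec_star_hatv (hp : ∀ ω, 0 < p ω)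
    (hp1 : ∑ i, p i = 1) (hc : ∀ k, ∑ i, (p i : ℂ) * v i k = 0)
    (hn : ∀ k l, ∑ i, (p i : ℂ) * ((starRingEnd ℂ) (v i k) * v i l) = if k = l then 1 else 0)
    (ω : Fin (N + 1)) :
    ((obtuseMatrix p v)ᵀ * obtuseMatrix p v) *ᵥ star (hatv v ω) = hatv v ω := by
  have hrow : obtuseMatrix p v ω = (Real.sqrt (p ω) : ℂ) • hatv v ω := rfl
  have h := transpose_mul_self_mulVec_star_row
    (obtuseMatrix_mem_unitaryGroup p v (fun ω => (hp ω).le) hp1 hc hn) ω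
  rw [hrow, star_smul, Complex.star_def, Complex.conj_ofReal, mulVec_smul] at h
  exact smul_right_injective _ (by exact_mod_cast (Real.sqrt_pos.mpr (hp ω)).ne') h

end ObtuseMatrix

theorem tensor_S0_symmetric_unitary_and_real_reduction_general (N : ℕ)
    (v : Fin (N + 1) → EuclideanSpace ℂ (Fin N))
    (p : Fin (N + 1) → ℝ) (hp : ∀ i, 0 < p i) (hp1 : ∑ i, p i = 1)
    (hc : ∀ k, ∑ i, (p i : ℂ) * v i k = 0)
    (hn : ∀ k l, ∑ i, (p i : ℂ) * ((starRingEnd ℂ) (v i k) * v i l)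
        = if k = l then 1 else 0)
    (S0 : Matrix (Fin (N + 1)) (Fin (N + 1)) ℂ)
    (hS0 : ∀ i j, S0 i j = tensorS p v i j 0) :
    S0ᵀ = S0 ∧ S0 ∈ Matrix.unitaryGroup (Fin (N + 1)) ℂ ∧
    (∃ V ∈ Matrix.unitaryGroup (Fin (N + 1)) ℂ, FixesE0 V ∧ S0 = V * Vᵀ) ∧
    ∀ V ∈ Matrix.unitaryGroup (Fin (N + 1)) ℂ, FixesE0 V → S0 = V * Vᵀ →
      ∀ ω i, ((∑ j, (starRingEnd ℂ) (V j i) * hatv v ω j)).im = 0 := by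
  have hW := obtuseMatrix_mem_unitaryGroup p v (fun ω => (hp ω).le) hp1 hc hn
  obtain rfl : S0 = (obtuseMatrix p v)ᵀ * obtuseMatrix p v := by
    ext i j
    rw [hS0, transpose_obtuseMatrix_mul_self_apply p v (fun ω => (hp ω).le)]
  refine ⟨by rw [transpose_mul, transpose_transpose],
    mul_mem (transpose_mem_unitaryGroup_iff.mpr hW) hW, ?_, ?_⟩
  · obtain ⟨V, hV, hV0, hVV⟩ := exists_mem_unitaryGroup_transpose_mul_self_eq hW
      (i₀ := 0) (u := fun ω => Real.sqrt (p ω)) (fun ω => by simp [obtuseMatrix])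
    exact ⟨V, hV, fixesE0_of_row_col hV0, hVV⟩
  · intro V hV _ hVV ω i
    rw [← Complex.conj_eq_iff_im]
    refine congrFun (star_conjTranspose_mulVec_eq_self hV ?_) i
    rw [← hVV]
    exact transpose_obtuseMatrix_mul_self_mulVec_star_hatv p v hp hp1 hc hn ω

/-- **Reduction to real obtuse random variables.**
Let `X` be an obtuse random variable in `ℂ^N` with 3-tensor `S` and let
`S₀ = (S^{ij}_0)_{i,j}`.  Then `S₀` is symmetric and unitary; there exists a unitary
`V` (fixing `e₀`) with `S₀ = V Vᵀ`, and for any such `V` the random variable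
`R = V* X` takes only real values. -/
theorem tensor_S0_symmetric_unitary_and_real_reduction (N : ℕ)
    (v : Fin (N + 1) → EuclideanSpace ℂ (Fin N)) (hv : Function.Injective v)
    (p : Fin (N + 1) → ℝ) (hp : ∀ i, 0 < p i) (hp1 : ∑ i, p i = 1)
    (hc : ∀ k, ∑ i, (p i : ℂ) * v i k = 0)
    (hn : ∀ k l, ∑ i, (p i : ℂ) * ((starRingEnd ℂ) (v i k) * v i l)
        = if k = l then 1 else 0)
    (S0 : Matrix (Fin (N + 1)) (Fin (N + 1)) ℂ)
    (hS0 : ∀ i j, S0 i j = tensorS p v i j 0) :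
    S0ᵀ = S0 ∧ S0 ∈ Matrix.unitaryGroup (Fin (N + 1)) ℂ ∧
    (∃ V ∈ Matrix.unitaryGroup (Fin (N + 1)) ℂ, FixesE0 V ∧ S0 = V * Vᵀ) ∧
    ∀ V ∈ Matrix.unitaryGroup (Fin (N + 1)) ℂ, FixesE0 V → S0 = V * Vᵀ →
      ∀ ω i, ((∑ j, (starRingEnd ℂ) (V j i) * hatv v ω j)).im = 0 :=
  tensor_S0_symmetric_unitary_and_real_reduction_general N v p hp hp1 hc hn S0 hS0
end
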